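/- arXiv:1703.10870 — 9 statements merged into one kernel-verified Lean document; each statement's English description precedes it below -/
import Mathlib

section
/- For smooth functions F, G, h on an open interval I ⊆ ℝ and any n ∈ ℕ, one has Op_n[F·G]h = ∑_{s=0}^{n} (F^{(n-s)}/(n-s)!) · (Op_s[G]h), as functions on I. -/
open Polynomial

/-- The Pochhammer symbol `(1/2)_s`. -/
noncomputable def poch (s : ℕ) : ℝ := (ascPochhammer ℝ s).eval (1/2 : ℝ)

/-- The operator `Op_n[F]` acting on `h`, with derivatives taken within the set `I`:
`(Op_n[F]h)(a) = ∑_{s=0}^{n} F^{(n-s)}(a)/(n-s)! · h^{(s)}(a)/(1/2)_s`. -/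
noncomputable def OpW (I : Set ℝ) (n : ℕ) (F h : ℝ → ℝ) (a : ℝ) : ℝ :=
  ∑ s ∈ Finset.range (n + 1),
    iteratedDerivWithin (n - s) F I a / (Nat.factorial (n - s) : ℝ) *
      (iteratedDerivWithin s h I a / poch s)

/-!
`Op_n[F]h (a)` is the `n`-th coefficient of the product of the formal Taylor series of `F` at `a`
with the series `∑ h^{(s)}(a)/(1/2)_s X^s`. By the Leibniz rule the Taylor series of `F·G` is the
product of those of `F` and `G`, so the identity is associativity of multiplication of power
series, read off at the coefficient of `X^n`.
-/

open Finset PowerSeries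
open scoped Nat ContDiff

theorem PowerSeries.coeff_mul_eq_sum_range {R : Type*} [CommSemiring R] (n : ℕ) (p q : R⟦X⟧) :
    coeff n (p * q) = ∑ s ∈ range (n + 1), coeff (n - s) p * coeff s q := by
  rw [mul_comm, PowerSeries.coeff_mul,
    Nat.sum_antidiagonal_eq_sum_range_succ (fun i j => coeff i q * coeff j p)]
  exact sum_congr rfl fun _ _ => mul_comm _ _

section TaylorSeries

variable {𝕜 : Type*} [NontriviallyNormedField 𝕜] [CharZero 𝕜]

noncomputable def taylorSeriesWithin (F : 𝕜 → 𝕜) (I : Set 𝕜) (a : 𝕜) : 𝕜⟦X⟧ :=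
  mk fun k => iteratedDerivWithin k F I a / k !

theorem taylorSeriesWithin_mul {F G : 𝕜 → 𝕜} {I : Set 𝕜} {a : 𝕜} (hI : UniqueDiffOn 𝕜 I)
    (ha : a ∈ I) (hF : ContDiffWithinAt 𝕜 ∞ F I a) (hG : ContDiffWithinAt 𝕜 ∞ G I a) :
    taylorSeriesWithin (F * G) I a = taylorSeriesWithin F I a * taylorSeriesWithin G I a := by
  ext m
  rw [PowerSeries.coeff_mul, Nat.sum_antidiagonal_eq_sum_range_succ
    (fun i j => coeff i (taylorSeriesWithin F I a) * coeff j (taylorSeriesWithin G I a))]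
  simp only [taylorSeriesWithin, coeff_mk]
  rw [iteratedDerivWithin_mul ha hI (hF.of_le (by exact_mod_cast le_top))
    (hG.of_le (by exact_mod_cast le_top)), sum_div]
  refine sum_congr rfl fun i hi => ?_
  have hi : i ≤ m := Nat.lt_succ_iff.mp (mem_range.mp hi)
  rw [Nat.cast_choose 𝕜 hi]
  field_simp
  simp only [mul_assoc]
  exact mul_div_mul_left _ _ (Nat.cast_ne_zero.mpr m.factorial_ne_zero)

end TaylorSeries

noncomputable def halfPochhammerSeries (h : ℝ → ℝ) (I : Set ℝ) (a : ℝ) : ℝ⟦X⟧ :=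
  mk fun s => iteratedDerivWithin s h I a / poch s

theorem OpW_eq_coeff (I : Set ℝ) (n : ℕ) (F h : ℝ → ℝ) (a : ℝ) :
    OpW I n F h a = coeff n (taylorSeriesWithin F I a * halfPochhammerSeries h I a) := by
  simp [OpW, coeff_mul_eq_sum_range, taylorSeriesWithin, halfPochhammerSeries]

theorem stmt1_general (I : Set ℝ) (hIopen : IsOpen I)
    (F G h : ℝ → ℝ) (hF : ContDiffOn ℝ (⊤ : ℕ∞) F I) (hG : ContDiffOn ℝ (⊤ : ℕ∞) G I)
    (n : ℕ) :
    ∀ a ∈ I,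
      OpW I n (fun t => F t * G t) h a =
        ∑ s ∈ Finset.range (n + 1),
          iteratedDerivWithin (n - s) F I a / (Nat.factorial (n - s) : ℝ) * OpW I s G h a := by
  intro a ha
  have hFG := taylorSeriesWithin_mul hIopen.uniqueDiffOn ha (hF a ha) (hG a ha)
  rw [OpW_eq_coeff, show (fun t => F t * G t) = F * G from rfl, hFG, mul_assoc,
    coeff_mul_eq_sum_range]
  simp only [OpW_eq_coeff, taylorSeriesWithin, coeff_mk]

/-- For smooth functions `F, G, h` on an open interval `I ⊆ ℝ` and any `n ∈ ℕ`,
`Op_n[F·G]h = ∑_{s=0}^{n} (F^{(n-s)}/(n-s)!) · (Op_s[G]h)` on `I`. -/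
theorem stmt1 (I : Set ℝ) (hIopen : IsOpen I) (hIconn : I.OrdConnected)
    (F G h : ℝ → ℝ) (hF : ContDiffOn ℝ (⊤ : ℕ∞) F I) (hG : ContDiffOn ℝ (⊤ : ℕ∞) G I)
    (hh : ContDiffOn ℝ (⊤ : ℕ∞) h I) (n : ℕ) :
    ∀ a ∈ I,
      OpW I n (fun t => F t * G t) h a =
        ∑ s ∈ Finset.range (n + 1),
          iteratedDerivWithin (n - s) F I a / (Nat.factorial (n - s) : ℝ) * OpW I s G h a :=
  stmt1_general I hIopen F G h hF hG n
end

section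
/- Let a₁ ∈ ℝ, ε ∈ {-1,1}, Δ(a) = ε(a-a₁), and let I ⊆ ℝ be an open interval on which Δ > 0. For every smooth function F on I and every k ∈ ℕ, one has (Op_k[F] (Δ^{-1/2}))(a) = Δ(a)^{1/2} · (1/k!) · D_a^k (F/Δ)(a) for all a ∈ I, where D_a^k denotes the k-th derivative. -/
open Polynomial

open Filter Topology

/-! Both sides are computed term by term. Since `D^s Δ^{-r} = (-ε)^s (r)_s Δ^{-r-s}`, the Leibniz
rule for `F/Δ = Δ^{-1} · F` gives `D^k (F/Δ) = ∑_s C(k,s) (-ε)^s s! Δ^{-1-s} F^{(k-s)}`, while the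
`s`-th term of `Op_k[F] Δ^{-1/2}` is `F^{(k-s)}/(k-s)! · (-ε)^s Δ^{-1/2-s}`: the factor `(1/2)_s`
cancels, and `C(k,s) s! / k! = 1/(k-s)!`. -/

theorem iteratedDeriv_mul_sub_rpow_neg {ε a₁ a : ℝ} (ha : ε * (a - a₁) ≠ 0) (r : ℝ) (s : ℕ) :
    iteratedDeriv s (fun t => (ε * (t - a₁)) ^ (-r)) a =
      (-ε) ^ s * (ascPochhammer ℝ s).eval r * (ε * (a - a₁)) ^ (-r - s) := by
  induction s generalizing r with
  | zero => simp
  | succ s ih =>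
    have hderiv : deriv (fun t => (ε * (t - a₁)) ^ (-r)) =ᶠ[𝓝 a]
        fun t => -(ε * r) * (ε * (t - a₁)) ^ (-(r + 1)) := by
      have hU : IsOpen {t : ℝ | ε * (t - a₁) ≠ 0} := isOpen_ne_fun (by fun_prop) (by fun_prop)
      filter_upwards [hU.mem_nhds ha] with t ht
      have hlin : HasDerivAt (fun t : ℝ => ε * (t - a₁)) ε t := by
        simpa using ((hasDerivAt_id t).sub_const a₁).const_mul ε
      rw [(hlin.rpow_const (p := -r) (Or.inl ht)).deriv]
      ring_nf
    rw [iteratedDeriv_succ', hderiv.iteratedDeriv_eq, iteratedDeriv_const_mul_field, ih,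
      ascPochhammer_succ_left, eval_mul, eval_comp, eval_X, eval_add, eval_X, eval_one,
      show -(r + 1) - (s : ℝ) = -r - ((s + 1 : ℕ) : ℝ) by push_cast; ring]
    ring

theorem iteratedDeriv_div_mul_sub {F : ℝ → ℝ} {ε a₁ a : ℝ} {k : ℕ} (hF : ContDiffAt ℝ k F a)
    (ha : ε * (a - a₁) ≠ 0) :
    iteratedDeriv k (fun t => F t / (ε * (t - a₁))) a =
      ∑ s ∈ Finset.range (k + 1), (k.choose s : ℝ) *
        ((-ε) ^ s * s.factorial * (ε * (a - a₁)) ^ (-1 - s : ℝ)) * iteratedDeriv (k - s) F a := by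
  have hinv : ContDiffAt ℝ k (fun t => (ε * (t - a₁)) ^ (-(1 : ℝ))) a := by
    simp only [Real.rpow_neg_one]
    exact (contDiffAt_id.sub contDiffAt_const |>.const_smul ε).inv ha
  have hdiv : (fun t => F t / (ε * (t - a₁))) = (fun t => (ε * (t - a₁)) ^ (-(1 : ℝ))) * F := by
    ext t
    simp [Real.rpow_neg_one, div_eq_inv_mul]
  rw [hdiv, iteratedDeriv_mul hinv hF]
  refine Finset.sum_congr rfl fun s _ => ?_
  rw [iteratedDeriv_mul_sub_rpow_neg ha 1 s, ascPochhammer_eval_one]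

theorem stmt2_general (a₁ ε : ℝ)
    (I : Set ℝ) (hIopen : IsOpen I)
    (hΔ : ∀ a ∈ I, 0 < ε * (a - a₁))
    (F : ℝ → ℝ) (hF : ContDiffOn ℝ (⊤ : ℕ∞) F I) (k : ℕ) :
    ∀ a ∈ I,
      OpW I k F (fun t => (ε * (t - a₁)) ^ (-(1/2) : ℝ)) a =
        (ε * (a - a₁)) ^ ((1/2) : ℝ) * ((1 : ℝ) / (Nat.factorial k : ℝ)) *
          iteratedDerivWithin k (fun t => F t / (ε * (t - a₁))) I a := by
  intro a ha
  have hΔa := hΔ a ha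
  have hFa : ContDiffAt ℝ k F a :=
    (hF.contDiffAt (hIopen.mem_nhds ha)).of_le (by exact_mod_cast le_top)
  simp only [OpW, iteratedDerivWithin_of_isOpen hIopen ha]
  rw [iteratedDeriv_div_mul_sub hFa hΔa.ne', Finset.mul_sum]
  refine Finset.sum_congr rfl fun s hs => ?_
  have hsk : s ≤ k := Finset.mem_range_succ_iff.mp hs
  have hchoose : (k.choose s : ℝ) * s.factorial * (k - s).factorial = k.factorial := by
    exact_mod_cast Nat.choose_mul_factorial_mul_factorial hsk
  have hchoose_ne : (k.choose s : ℝ) ≠ 0 := by exact_mod_cast (Nat.choose_pos hsk).ne'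
  have hpow : (ε * (a - a₁)) ^ ((1/2) : ℝ) * (ε * (a - a₁)) ^ (-1 - s : ℝ) =
      (ε * (a - a₁)) ^ (-(1/2) - s : ℝ) := by
    rw [← Real.rpow_add hΔa]
    ring_nf
  have hpoch : poch s ≠ 0 := (ascPochhammer_pos s (1/2 : ℝ) (by norm_num)).ne'
  rw [iteratedDeriv_mul_sub_rpow_neg hΔa.ne' (1/2) s, ← hpow, ← hchoose]
  unfold poch at hpoch ⊢
  field_simp

/-- With `Δ(a) = ε(a-a₁) > 0` on the open interval `I`, for every smooth `F`
on `I` and every `k ∈ ℕ`, `(Op_k[F] Δ^{-1/2})(a) = Δ(a)^{1/2} · (1/k!) · D_a^k (F/Δ)(a)`. -/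
theorem stmt2 (a₁ ε : ℝ) (hε : ε = 1 ∨ ε = -1)
    (I : Set ℝ) (hIopen : IsOpen I) (hIconn : I.OrdConnected)
    (hΔ : ∀ a ∈ I, 0 < ε * (a - a₁))
    (F : ℝ → ℝ) (hF : ContDiffOn ℝ (⊤ : ℕ∞) F I) (k : ℕ) :
    ∀ a ∈ I,
      OpW I k F (fun t => (ε * (t - a₁)) ^ (-(1/2) : ℝ)) a =
        (ε * (a - a₁)) ^ ((1/2) : ℝ) * ((1 : ℝ) / (Nat.factorial k : ℝ)) *
          iteratedDerivWithin k (fun t => F t / (ε * (t - a₁))) I a :=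
  stmt2_general a₁ ε I hIopen hΔ F hF k
end

section
/- Let a₁,…,a_n be distinct reals (n ≥ 1), ε₁,…,ε_n ∈ {-1,1}, Δᵢ(a) = εᵢ(a-aᵢ), and let I ⊆ ℝ be an open interval on which Δᵢ > 0 for all i. Let F̂(a) = ∏_{i=1}^n (a-aᵢ). Then for all real ξ₁,…,ξ_n, the function x(a) = ∑_{i=1}^n ξᵢ Δᵢ(a)^{-1/2} satisfies the linear ODE Op_n[F̂]x = 0 on I. -/
open Polynomial

/-- The operator `Op_n[F]` acting on `h`:
`(Op_n[F]h)(a) = ∑_{s=0}^{n} F^{(n-s)}(a)/(n-s)! · h^{(s)}(a)/(1/2)_s`. -/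
noncomputable def Op (n : ℕ) (F h : ℝ → ℝ) (a : ℝ) : ℝ :=
  ∑ s ∈ Finset.range (n + 1),
    iteratedDeriv (n - s) F a / (Nat.factorial (n - s) : ℝ) *
      (iteratedDeriv s h a / poch s)

/-!
The `s`-th derivative of `Δᵢ^{-1/2}` at `t` is `(1/2)_s · Δᵢ(t)^{-1/2} / (aᵢ - t)^s`, so
the Pochhammer factors in `Op_n` cancel and, for a polynomial `F` of degree at most `n`,
`Op_n[F] Δᵢ^{-1/2} (t) = Δᵢ(t)^{-1/2} (aᵢ - t)^{-n} ∑_m F^{(m)}(t)/m! (aᵢ - t)^m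
  = Δᵢ(t)^{-1/2} (aᵢ - t)^{-n} F(aᵢ)`
by Taylor's formula. For `F = F̂` this vanishes because `aᵢ` is a root of `F̂`, and `Op_n[F]` is
linear in the function it acts on.
-/

lemma poch_succ (s : ℕ) : poch (s + 1) = poch s * (1/2 + s) := by
  simp [poch, ascPochhammer_succ_right]

lemma poch_pos (s : ℕ) : 0 < poch s := by
  induction s with
  | zero => simp [poch]
  | succ s ih => rw [poch_succ]; positivity

lemma hasDerivAt_rpow_neg_half_div_pow {ε b t : ℝ} (ht : 0 < ε * (t - b)) (s : ℕ) :
    HasDerivAt (fun u => (ε * (u - b)) ^ (-(1/2) : ℝ) / (b - u) ^ s)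
      ((1/2 + s) * ((ε * (t - b)) ^ (-(1/2) : ℝ) / (b - t) ^ (s + 1))) t := by
  have hε : ε ≠ 0 := by rintro rfl; simp at ht
  have htb : t - b ≠ 0 := by rintro h; simp [h] at ht
  have hbt : b - t ≠ 0 := by rwa [← neg_sub, neg_ne_zero]
  have hbase : HasDerivAt (fun u => ε * (u - b)) ε t := by
    simpa using ((hasDerivAt_id t).sub_const b).const_mul ε
  have hpow : HasDerivAt (fun u => (b - u) ^ s) (-(s * (b - t) ^ (s - 1))) t := by
    simpa using ((hasDerivAt_id t).const_sub b).fun_pow s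
  refine ((hbase.rpow_const (p := -(1/2)) (.inl ht.ne')).div hpow
    (pow_ne_zero s hbt)).congr_deriv ?_
  rw [Real.rpow_sub_one ht.ne']
  rcases s with _ | s
  · field_simp; ring
  · simp only [Nat.add_sub_cancel, pow_succ]; field_simp; push_cast; ring

lemma iteratedDeriv_rpow_neg_half (ε b : ℝ) (s : ℕ) {t : ℝ} (ht : 0 < ε * (t - b)) :
    iteratedDeriv s (fun u => (ε * (u - b)) ^ (-(1/2) : ℝ)) t
      = poch s * ((ε * (t - b)) ^ (-(1/2) : ℝ) / (b - t) ^ s) := by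
  induction s generalizing t with
  | zero => simp [poch]
  | succ s ih =>
    have hnhds : iteratedDeriv s (fun u => (ε * (u - b)) ^ (-(1/2) : ℝ))
        =ᶠ[nhds t] fun u => poch s * ((ε * (u - b)) ^ (-(1/2) : ℝ) / (b - u) ^ s) :=
      Filter.eventually_of_mem
        ((isOpen_lt continuous_const (by fun_prop : Continuous fun u => ε * (u - b))).mem_nhds ht)
        fun _ hu => ih hu
    rw [iteratedDeriv_succ, hnhds.deriv_eq,
      ((hasDerivAt_rpow_neg_half_div_pow ht s).const_mul (poch s)).deriv, poch_succ]
    ring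

lemma contDiffAt_rpow_neg_half {ε b t : ℝ} (ht : 0 < ε * (t - b)) (n : ℕ) :
    ContDiffAt ℝ n (fun u => (ε * (u - b)) ^ (-(1/2) : ℝ)) t :=
  ContDiffAt.rpow_const_of_ne (by fun_prop) ht.ne'

lemma iteratedDeriv_eval (p : ℝ[X]) (m : ℕ) :
    iteratedDeriv m (fun u => p.eval u) = fun t => (derivative^[m] p).eval t := by
  induction m with
  | zero => rfl
  | succ m ih =>
    rw [iteratedDeriv_succ, ih, Function.iterate_succ_apply']
    exact funext fun t => Polynomial.deriv _

lemma sum_range_iterate_derivative_eval_div_factorial_mul_pow {p : ℝ[X]} {N : ℕ}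
    (h : p.natDegree < N) (t c : ℝ) :
    ∑ m ∈ Finset.range N, (derivative^[m] p).eval t / m.factorial * (c - t) ^ m = p.eval c := by
  rw [← taylor_eval_sub t, eval_eq_sum_range' (by rwa [natDegree_taylor])]
  refine Finset.sum_congr rfl fun m _ => ?_
  rw [taylor_coeff, ← factorial_smul_hasseDeriv]
  simp [Nat.factorial_ne_zero, mul_comm]

lemma Op_sum_const_mul {ι : Type*} (s : Finset ι) (n : ℕ) (F : ℝ → ℝ)
    (h : ι → ℝ → ℝ) (ξ : ι → ℝ) {t : ℝ} (hh : ∀ i ∈ s, ContDiffAt ℝ n (h i) t) :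
    Op n F (fun u => ∑ i ∈ s, ξ i * h i u) t = ∑ i ∈ s, ξ i * Op n F (h i) t := by
  simp only [Op, Finset.mul_sum]
  rw [Finset.sum_comm]
  refine Finset.sum_congr rfl fun k hk => ?_
  have hkn : (k : WithTop ℕ∞) ≤ n := by
    exact_mod_cast Nat.lt_succ_iff.mp (Finset.mem_range.mp hk)
  rw [iteratedDeriv_fun_sum fun i hi => contDiffAt_const.mul ((hh i hi).of_le hkn),
    Finset.sum_div, Finset.mul_sum]
  refine Finset.sum_congr rfl fun i _ => ?_
  rw [iteratedDeriv_const_mul_field]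
  ring

lemma Op_eval_of_iteratedDeriv_eq {n : ℕ} {p : ℝ[X]} (hp : p.natDegree ≤ n) {h : ℝ → ℝ}
    {b t : ℝ} (hbt : b ≠ t)
    (hh : ∀ s ≤ n, iteratedDeriv s h t = poch s * (h t / (b - t) ^ s)) :
    Op n (fun u => p.eval u) h t = h t / (b - t) ^ n * p.eval b := by
  have hbt' : b - t ≠ 0 := sub_ne_zero.mpr hbt
  have hterm : ∀ s ∈ Finset.range (n + 1),
      iteratedDeriv (n - s) (fun u => p.eval u) t / (n - s).factorial *
          (iteratedDeriv s h t / poch s)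
        = h t / (b - t) ^ n *
          ((derivative^[n - s] p).eval t / (n - s).factorial * (b - t) ^ (n - s)) := by
    intro s hs
    have hsn : s ≤ n := Nat.lt_succ_iff.mp (Finset.mem_range.mp hs)
    rw [hh s hsn, iteratedDeriv_eval, ← Nat.sub_add_cancel hsn, Nat.add_sub_cancel, pow_add]
    field_simp [(poch_pos s).ne']
  rw [Op, Finset.sum_congr rfl hterm, ← Finset.mul_sum,
    ← sum_range_iterate_derivative_eval_div_factorial_mul_pow (Nat.lt_succ_of_le hp) t]
  conv_rhs => rw [← Finset.sum_range_reflect]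
  rfl

theorem Op_prod_sub_sum_rpow_neg_half {n : ℕ} (a ε ξ : Fin n → ℝ) {t : ℝ}
    (ht : ∀ i, 0 < ε i * (t - a i)) :
    Op n (fun u => ∏ i, (u - a i)) (fun u => ∑ i, ξ i * (ε i * (u - a i)) ^ (-(1/2) : ℝ)) t
      = 0 := by
  set P : ℝ[X] := ∏ i, (X - C (a i))
  have hP : (fun u => ∏ i, (u - a i)) = fun u => P.eval u := by
    ext u; simp [P, eval_prod]
  have hdeg : P.natDegree ≤ n := by simp [P]
  rw [hP, Op_sum_const_mul _ _ _ _ _ fun i _ => contDiffAt_rpow_neg_half (ht i) n]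
  refine Finset.sum_eq_zero fun i _ => ?_
  have hroot : P.eval (a i) = 0 := by
    simpa [P, eval_prod] using Finset.prod_eq_zero (Finset.mem_univ i) (sub_self (a i))
  have hne : a i ≠ t := fun h => by simpa [h] using ht i
  rw [Op_eval_of_iteratedDeriv_eq hdeg hne fun s _ => iteratedDeriv_rpow_neg_half _ _ s (ht i),
    hroot, mul_zero, mul_zero]

theorem stmt3_general (n : ℕ) (a : Fin n → ℝ)
    (ε : Fin n → ℝ)
    (I : Set ℝ)
    (hΔ : ∀ i, ∀ t ∈ I, 0 < ε i * (t - a i))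
    (ξ : Fin n → ℝ) :
    ∀ t ∈ I,
      Op n (fun u => ∏ i, (u - a i))
        (fun u => ∑ i, ξ i * (ε i * (u - a i)) ^ (-(1/2) : ℝ)) t = 0 :=
  fun t ht => Op_prod_sub_sum_rpow_neg_half a ε ξ fun i => hΔ i t ht

/-- For distinct reals `a₁,…,a_n` (`n ≥ 1`), signs `εᵢ ∈ {±1}`,
`Δᵢ(a) = εᵢ(a-aᵢ)` positive on the open interval `I`, and `F̂(a) = ∏ᵢ (a-aᵢ)`, the function
`x(a) = ∑ᵢ ξᵢ Δᵢ(a)^{-1/2}` satisfies the linear ODE `Op_n[F̂]x = 0` on `I`. -/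
theorem stmt3 (n : ℕ) (hn : 1 ≤ n) (a : Fin n → ℝ) (ha : Function.Injective a)
    (ε : Fin n → ℝ) (hε : ∀ i, ε i = 1 ∨ ε i = -1)
    (I : Set ℝ) (hIopen : IsOpen I) (hIconn : I.OrdConnected)
    (hΔ : ∀ i, ∀ t ∈ I, 0 < ε i * (t - a i))
    (ξ : Fin n → ℝ) :
    ∀ t ∈ I,
      Op n (fun u => ∏ i, (u - a i))
        (fun u => ∑ i, ξ i * (ε i * (u - a i)) ^ (-(1/2) : ℝ)) t = 0 :=
  stmt3_general n a ε I hΔ ξ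
end

section
/- Let F and x be smooth functions on an open interval I ⊆ ℝ, and for k ≥ 1 define b_k(a) = ∑_{s=1}^{k} F^{(k-s)}(a)/(k-s)! · x^{(s)}(a)/(1/2)_s. Then b₁ = 2 F x′, and for every k ≥ 1 one has b_k′ = (k + 1/2) b_{k+1} − (F^{(k)}/k!) x′ on I. -/
/-! Differentiating `b_k` term by term with the Leibniz rule produces, in terms of
`g_s = F^{(k+1-s)}/(k+1-s)! · x^{(s)}/(1/2)_s`, the terms `(k+1-s) g_s` and `(s+1/2) g_{s+1}`,
the latter because `(1/2)_{s+1} = (1/2)_s (s+1/2)`. After the index shift `s+1 ↦ s` the two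
weights add up to `k + 1/2` for every `s`, apart from the missing `s = 1` term
`g_1/2 = F^{(k)}/k! · x'`. -/

open Polynomial

/-- The coefficient `b_k(a) = ∑_{s=1}^{k} F^{(k-s)}(a)/(k-s)! · x^{(s)}(a)/(1/2)_s`,
with derivatives taken within the set `I`. -/
noncomputable def bfun (I : Set ℝ) (F x : ℝ → ℝ) (k : ℕ) (a : ℝ) : ℝ :=
  ∑ s ∈ Finset.Icc 1 k,
    iteratedDerivWithin (k - s) F I a / (Nat.factorial (k - s) : ℝ) *
      (iteratedDerivWithin s x I a / poch s)

lemma poch_one : poch 1 = 1/2 := by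
  simp [poch]

lemma poch_ne_zero (s : ℕ) : poch s ≠ 0 :=
  (ascPochhammer_pos s _ one_half_pos).ne'

lemma sum_Icc_shift_weights (g : ℕ → ℝ) (k : ℕ) :
    ∑ s ∈ Finset.Icc 1 k, (((k : ℝ) + 1 - s) * g s + ((s : ℝ) + 1/2) * g (s + 1)) =
      ((k : ℝ) + 1/2) * ∑ s ∈ Finset.Icc 1 (k + 1), g s - g 1 / 2 := by
  induction k with
  | zero => simp; ring
  | succ k ih =>
    have hsplit : ∀ s ∈ Finset.Icc 1 (k + 1),
        (((k + 1 : ℕ) : ℝ) + 1 - s) * g s + ((s : ℝ) + 1/2) * g (s + 1) =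
          ((((k : ℝ) + 1 - s) * g s + ((s : ℝ) + 1/2) * g (s + 1)) + g s) := by
      intro s _; push_cast; ring
    rw [Finset.sum_congr rfl hsplit, Finset.sum_add_distrib, Finset.sum_Icc_succ_top (by omega),
      ih, Finset.sum_Icc_succ_top (by omega : 1 ≤ k + 1 + 1),
      Finset.sum_Icc_succ_top (by omega : 1 ≤ k + 1)]
    push_cast; ring

lemma sum_leibniz_terms_eq (k : ℕ) (A X : ℕ → ℝ) :
    ∑ s ∈ Finset.Icc 1 k,
      (A (k - s + 1) / (k - s).factorial * (X s / poch s) +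
        A (k - s) / (k - s).factorial * (X (s + 1) / poch s)) =
      ((k : ℝ) + 1/2) *
          ∑ s ∈ Finset.Icc 1 (k + 1), A (k + 1 - s) / (k + 1 - s).factorial * (X s / poch s) -
        A k / k.factorial * X 1 := by
  set g : ℕ → ℝ := fun s => A (k + 1 - s) / (k + 1 - s).factorial * (X s / poch s)
  have hterm : ∀ s ∈ Finset.Icc 1 k,
      A (k - s + 1) / (k - s).factorial * (X s / poch s) +
          A (k - s) / (k - s).factorial * (X (s + 1) / poch s) =
        ((k : ℝ) + 1 - s) * g s + ((s : ℝ) + 1/2) * g (s + 1) := by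
    intro s hs
    obtain ⟨j, rfl⟩ := Nat.exists_eq_add_of_le (Finset.mem_Icc.mp hs).2
    have hj : s + j + 1 - s = j + 1 := by omega
    have hpoch := poch_ne_zero s
    simp only [g, hj, Nat.add_sub_cancel_left, Nat.add_sub_add_right, Nat.factorial_succ, poch_succ]
    push_cast
    field_simp
    ring
  rw [Finset.sum_congr rfl hterm, sum_Icc_shift_weights]
  simp [g, poch_one]
  ring

lemma hasDerivWithinAt_iteratedDerivWithin {𝕜 E : Type*} [NontriviallyNormedField 𝕜]
    [NormedAddCommGroup E] [NormedSpace 𝕜 E] {n : WithTop ℕ∞} {m : ℕ} {f : 𝕜 → E} {s : Set 𝕜}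
    {a : 𝕜} (hf : ContDiffOn 𝕜 n f s) (hmn : m < n) (hs : UniqueDiffOn 𝕜 s) (ha : a ∈ s) :
    HasDerivWithinAt (iteratedDerivWithin m f s) (iteratedDerivWithin (m + 1) f s a) s a := by
  rw [iteratedDerivWithin_succ]
  exact (hf.differentiableOn_iteratedDerivWithin hmn hs a ha).hasDerivWithinAt

lemma hasDerivWithinAt_bfun {I : Set ℝ} {F x : ℝ → ℝ} {k : ℕ} {a : ℝ}
    (hF : ContDiffOn ℝ k F I) (hx : ContDiffOn ℝ (k + 1) x I) (hI : UniqueDiffOn ℝ I)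
    (ha : a ∈ I) :
    HasDerivWithinAt (bfun I F x k)
      (∑ s ∈ Finset.Icc 1 k,
        (iteratedDerivWithin (k - s + 1) F I a / (k - s).factorial *
            (iteratedDerivWithin s x I a / poch s) +
          iteratedDerivWithin (k - s) F I a / (k - s).factorial *
            (iteratedDerivWithin (s + 1) x I a / poch s))) I a := by
  refine HasDerivWithinAt.fun_sum fun s hs => ?_
  obtain ⟨hs1, hsk⟩ := Finset.mem_Icc.mp hs
  have hFs := hasDerivWithinAt_iteratedDerivWithin hF (by exact_mod_cast (by omega : k - s < k))
    hI ha
  have hxs := hasDerivWithinAt_iteratedDerivWithin hx (by exact_mod_cast (by omega : s < k + 1))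
    hI ha
  exact (hFs.div_const _).mul (hxs.div_const _)

theorem stmt4_general (I : Set ℝ) (hIopen : IsOpen I)
    (F x : ℝ → ℝ) (hF : ContDiffOn ℝ (⊤ : ℕ∞) F I) (hx : ContDiffOn ℝ (⊤ : ℕ∞) x I) :
    (∀ a ∈ I, bfun I F x 1 a = 2 * F a * derivWithin x I a) ∧
    (∀ k : ℕ, 1 ≤ k → ∀ a ∈ I,
      derivWithin (bfun I F x k) I a =
        ((k : ℝ) + 1/2) * bfun I F x (k + 1) a -
          iteratedDerivWithin k F I a / (Nat.factorial k : ℝ) * derivWithin x I a) := by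
  refine ⟨fun a _ => ?_, fun k _ a ha => ?_⟩
  · simp [bfun, poch_one]
    ring
  · have hderiv := hasDerivWithinAt_bfun (k := k) (hF.of_le (mod_cast le_top))
      (hx.of_le (mod_cast le_top)) hIopen.uniqueDiffOn ha
    rw [hderiv.derivWithin (hIopen.uniqueDiffWithinAt ha), ← iteratedDerivWithin_one]
    exact sum_leibniz_terms_eq k (iteratedDerivWithin · F I a) (iteratedDerivWithin · x I a)

/-- For smooth `F`, `x` on an open interval `I`: `b₁ = 2 F x′`, and for every
`k ≥ 1`, `b_k′ = (k + 1/2) b_{k+1} − (F^{(k)}/k!) x′` on `I`. -/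
theorem stmt4 (I : Set ℝ) (hIopen : IsOpen I) (hIconn : I.OrdConnected)
    (F x : ℝ → ℝ) (hF : ContDiffOn ℝ (⊤ : ℕ∞) F I) (hx : ContDiffOn ℝ (⊤ : ℕ∞) x I) :
    (∀ a ∈ I, bfun I F x 1 a = 2 * F a * derivWithin x I a) ∧
    (∀ k : ℕ, 1 ≤ k → ∀ a ∈ I,
      derivWithin (bfun I F x k) I a =
        ((k : ℝ) + 1/2) * bfun I F x (k + 1) a -
          iteratedDerivWithin k F I a / (Nat.factorial k : ℝ) * derivWithin x I a) :=
  stmt4_general I hIopen F x hF hx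
end

section
/- Let a₁,…,a_n be distinct reals, ε₁,…,ε_n ∈ {-1,1}, Δᵢ(a) = εᵢ(a-aᵢ), let I ⊆ ℝ be an open interval on which Δᵢ > 0 for all i, let F̂(a) = ∏_{i=1}^n (a-aᵢ), and let x(a) = ∑_{i=1}^n ξᵢ Δᵢ(a)^{-1/2} with ξᵢ ∈ ℝ. Then for every 1 ≤ k ≤ n, the function b_k(a) = ∑_{s=1}^{k} F̂^{(k-s)}(a)/(k-s)! · x^{(s)}(a)/(1/2)_s satisfies b_k(a) = − ∑_{i=1}^n (εᵢ ξᵢ / Δᵢ(a)^{1/2}) · (1/(k-1)!) · D_a^{k-1}(F̂/Δᵢ)(a) on I. -/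
open Polynomial

/-!
Differentiating `Δᵢ^{-1/2}` gives `x^{(s)}/(1/2)_s = ∑ᵢ ξᵢ Δᵢ^{-1/2} (-(a - aᵢ)⁻¹)^s`,
so `b_k = ∑ᵢ ξᵢ Δᵢ^{-1/2} ∑_s c_{k-s} (-(a - aᵢ)⁻¹)^s` with `c_j` the Taylor coefficients
of `F̂` at `a`. Since `F̂ = (X - aᵢ) Qᵢ`, the Taylor expansion of `F̂` at `a` is `(X + (a - aᵢ))`
times that of `Qᵢ`, and the inner sum telescopes to minus the `(k-1)`-st Taylor coefficient
of `Qᵢ`. Near `a` we have `F̂/Δᵢ = εᵢ⁻¹ Qᵢ`, which turns this into the right-hand side.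
-/

open Finset

theorem iteratedDeriv_eqOn_of_hasDerivAt {𝕜 F : Type*} [NontriviallyNormedField 𝕜]
    [NormedAddCommGroup F] [NormedSpace 𝕜 F] {U : Set 𝕜} (hU : IsOpen U) {f : ℕ → 𝕜 → F}
    (hf : ∀ s, ∀ t ∈ U, HasDerivAt (f s) (f (s + 1) t) t) (s : ℕ) :
    Set.EqOn (iteratedDeriv s (f 0)) (f s) U := by
  induction s with
  | zero => intro t _; simp
  | succ s ih =>
    intro t ht
    rw [iteratedDeriv_succ, (Filter.eventuallyEq_of_mem (hU.mem_nhds ht) ih).deriv_eq]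
    exact (hf s t ht).deriv

theorem iteratedDeriv_rpow_affine {ε a r t : ℝ} (ht : 0 < ε * (t - a)) (s : ℕ) :
    iteratedDeriv s (fun u => (ε * (u - a)) ^ r) t =
      (descPochhammer ℝ s).eval r * ε ^ s * (ε * (t - a)) ^ (r - s) := by
  have hU : IsOpen {u : ℝ | 0 < ε * (u - a)} := isOpen_lt continuous_const (by fun_prop)
  have key := iteratedDeriv_eqOn_of_hasDerivAt hU
    (f := fun s u => (descPochhammer ℝ s).eval r * ε ^ s * (ε * (u - a)) ^ (r - s)) ?_ s ht
  · simpa using key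
  intro j u hu
  have hlin : HasDerivAt (fun u => ε * (u - a)) ε u := by
    simpa using ((hasDerivAt_id u).sub_const a).const_mul ε
  refine ((hlin.rpow_const (p := r - j) (Or.inl (ne_of_gt hu))).const_mul
    ((descPochhammer ℝ j).eval r * ε ^ j)).congr_deriv ?_
  rw [descPochhammer_succ_eval, Nat.cast_succ, sub_add_eq_sub_sub]
  ring

theorem descPochhammer_eval_neg_half (s : ℕ) :
    (descPochhammer ℝ s).eval (-(1/2)) = (-1) ^ s * poch s := by
  have h := ascPochhammer_eval_neg_eq_descPochhammer ℝ (-(1/2)) s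
  rw [neg_neg] at h
  rw [poch, h, ← mul_assoc, ← mul_pow]
  norm_num

theorem iteratedDeriv_rpow_neg_half_div_poch {ε a t : ℝ} (ht : 0 < ε * (t - a)) (s : ℕ) :
    iteratedDeriv s (fun u => (ε * (u - a)) ^ (-(1/2) : ℝ)) t / poch s =
      (ε * (t - a)) ^ (-(1/2) : ℝ) * (-(t - a)⁻¹) ^ s := by
  have hε : ε ≠ 0 := left_ne_zero_of_mul ht.ne'
  have hz : t - a ≠ 0 := right_ne_zero_of_mul ht.ne'
  have hpoch : poch s ≠ 0 := (ascPochhammer_pos s _ one_half_pos).ne'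
  rw [iteratedDeriv_rpow_affine ht, descPochhammer_eval_neg_half, Real.rpow_sub ht,
    Real.rpow_natCast, neg_pow (t - a)⁻¹, inv_pow, mul_pow]
  field_simp

theorem iteratedDeriv_sum_rpow_neg_half_div_poch {ι : Type*} (S : Finset ι) {ξ ε a : ι → ℝ}
    {t : ℝ} (ht : ∀ i ∈ S, 0 < ε i * (t - a i)) (s : ℕ) :
    iteratedDeriv s (fun u => ∑ i ∈ S, ξ i * (ε i * (u - a i)) ^ (-(1/2) : ℝ)) t / poch s =
      ∑ i ∈ S, ξ i * (ε i * (t - a i)) ^ (-(1/2) : ℝ) * (-(t - a i)⁻¹) ^ s := by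
  rw [iteratedDeriv_fun_sum, sum_div]
  · refine sum_congr rfl fun i hi => ?_
    rw [iteratedDeriv_const_mul_field, mul_div_assoc,
      iteratedDeriv_rpow_neg_half_div_poch (ht i hi), mul_assoc]
  · intro i hi
    exact contDiffAt_const.mul
      ((contDiffAt_const.mul (contDiffAt_id.sub contDiffAt_const)).rpow_const_of_ne (ht i hi).ne')

theorem iteratedDeriv_polynomial_eval {𝕜 : Type*} [NontriviallyNormedField 𝕜] (p : 𝕜[X]) (m : ℕ) :
    iteratedDeriv m (fun u => p.eval u) = fun u => (derivative^[m] p).eval u := by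
  induction m generalizing p with
  | zero => simp
  | succ m ih =>
    rw [iteratedDeriv_succ', show deriv (fun u => p.eval u) = fun u => (derivative p).eval u from
      funext fun _ => p.deriv, ih, Function.iterate_succ_apply]

theorem iteratedDeriv_eval_div_factorial {𝕜 : Type*} [NontriviallyNormedField 𝕜] [CharZero 𝕜]
    (p : 𝕜[X]) (m : ℕ) (t : 𝕜) :
    iteratedDeriv m (fun u => p.eval u) t / m.factorial = (taylor t p).coeff m := by
  rw [iteratedDeriv_polynomial_eval, taylor_coeff, ← factorial_smul_hasseDeriv]
  simp [Nat.factorial_ne_zero]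

theorem iteratedDeriv_prod_sub_div_factorial {𝕜 ι : Type*} [NontriviallyNormedField 𝕜] [CharZero 𝕜]
    (S : Finset ι) (a : ι → 𝕜) (m : ℕ) (t : 𝕜) :
    iteratedDeriv m (fun u => ∏ j ∈ S, (u - a j)) t / m.factorial =
      (taylor t (∏ j ∈ S, (X - C (a j)))).coeff m := by
  have hP : (fun u => ∏ j ∈ S, (u - a j)) = fun u => (∏ j ∈ S, (X - C (a j))).eval u := by
    ext u; simp [eval_prod]
  rw [hP, iteratedDeriv_eval_div_factorial]

theorem iteratedDeriv_mul_sub_div {𝕜 : Type*} [NontriviallyNormedField 𝕜] {f g : 𝕜 → 𝕜}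
    {r ε t : 𝕜} (hf : ∀ u, f u = (u - r) * g u) (ht : t ≠ r) (m : ℕ) :
    iteratedDeriv m (fun u => f u / (ε * (u - r))) t = ε⁻¹ * iteratedDeriv m g t := by
  have hfg : (fun u => f u / (ε * (u - r))) =ᶠ[nhds t] fun u => ε⁻¹ * g u := by
    filter_upwards [isOpen_ne.mem_nhds ht] with u hu
    rw [hf, mul_comm ε, div_mul_eq_div_div, mul_div_cancel_left₀ _ (sub_ne_zero.2 hu),
      inv_mul_eq_div]
  rw [hfg.iteratedDeriv_eq, iteratedDeriv_const_mul_field]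

theorem sum_Icc_coeff_X_add_C_mul_mul_pow {K : Type*} [Field K] (T : K[X]) {z : K} (hz : z ≠ 0)
    (k : ℕ) : ∑ s ∈ Icc 1 (k + 1), ((X + C z) * T).coeff (k + 1 - s) * (-z⁻¹) ^ s = -T.coeff k := by
  rw [← Ico_add_one_right_eq_Icc, sum_Ico_eq_sum_range, Nat.add_sub_cancel]
  simp_rw [show ∀ j, k + 1 - (1 + j) = k - j by omega, add_comm 1]
  have hcoeff : ∀ m, ((X + C z) * T).coeff (m + 1) = T.coeff m + z * T.coeff (m + 1) := by
    intro m; rw [add_mul, coeff_add, coeff_X_mul, coeff_C_mul]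
  induction k with
  | zero =>
    simp only [zero_add, range_one, sum_singleton, Nat.sub_zero, pow_one, add_mul, coeff_add,
      coeff_X_mul_zero, coeff_C_mul]
    linear_combination (-T.coeff 0) * mul_inv_cancel₀ hz
  | succ k ih =>
    rw [sum_range_succ', Nat.sub_zero, hcoeff]
    have : ∑ j ∈ range (k + 1), ((X + C z) * T).coeff (k + 1 - (j + 1)) * (-z⁻¹) ^ (j + 1 + 1) =
        -z⁻¹ * ∑ j ∈ range (k + 1), ((X + C z) * T).coeff (k - j) * (-z⁻¹) ^ (j + 1) := by
      rw [mul_sum]; refine sum_congr rfl fun j _ => ?_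
      rw [Nat.add_sub_add_right, pow_succ]; ring
    rw [this, ih]
    linear_combination (-T.coeff (k + 1)) * mul_inv_cancel₀ hz

theorem stmt6_general (n : ℕ) (a : Fin n → ℝ)
    (ε : Fin n → ℝ)
    (I : Set ℝ)
    (hΔ : ∀ i, ∀ t ∈ I, 0 < ε i * (t - a i))
    (ξ : Fin n → ℝ) :
    ∀ k : ℕ, 1 ≤ k → k ≤ n → ∀ t ∈ I,
      (∑ s ∈ Finset.Icc 1 k,
          iteratedDeriv (k - s) (fun u => ∏ i, (u - a i)) t / (Nat.factorial (k - s) : ℝ) *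
            (iteratedDeriv s (fun u => ∑ i, ξ i * (ε i * (u - a i)) ^ (-(1/2) : ℝ)) t / poch s)) =
        - ∑ i, ε i * ξ i / (ε i * (t - a i)) ^ ((1/2) : ℝ) *
            ((1 : ℝ) / (Nat.factorial (k - 1) : ℝ)) *
            iteratedDeriv (k - 1) (fun u => (∏ j, (u - a j)) / (ε i * (u - a i))) t := by
  intro k hk _ t ht
  obtain ⟨m, rfl⟩ : ∃ m, k = m + 1 := ⟨k - 1, by omega⟩
  have hΔt i : 0 < ε i * (t - a i) := hΔ i t ht
  have hε i : ε i ≠ 0 := left_ne_zero_of_mul (hΔt i).ne'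
  have hta i : t - a i ≠ 0 := right_ne_zero_of_mul (hΔt i).ne'
  have htaylor i : taylor t (∏ j, (X - C (a j))) =
      (X + C (t - a i)) * taylor t (∏ j ∈ univ.erase i, (X - C (a j))) := by
    rw [← mul_prod_erase univ _ (mem_univ i), taylor_mul, map_sub, taylor_X, taylor_C, C_sub]
    ring
  simp_rw [iteratedDeriv_prod_sub_div_factorial,
    iteratedDeriv_sum_rpow_neg_half_div_poch univ (fun i _ => hΔt i), mul_sum]
  rw [sum_comm, ← sum_neg_distrib]
  refine sum_congr rfl fun i _ => ?_
  have hprod u : ∏ j, (u - a j) = (u - a i) * ∏ j ∈ univ.erase i, (u - a j) :=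
    (mul_prod_erase univ (fun j => u - a j) (mem_univ i)).symm
  rw [iteratedDeriv_mul_sub_div hprod (sub_ne_zero.1 (hta i)), Nat.add_sub_cancel, htaylor i]
  simp_rw [mul_left_comm _ (ξ i * _)]
  rw [← mul_sum, sum_Icc_coeff_X_add_C_mul_mul_pow _ (hta i),
    ← iteratedDeriv_prod_sub_div_factorial, Real.rpow_neg (hΔt i).le]
  field_simp [hε i]

/-- For distinct reals `a₁,…,a_n`, signs `εᵢ ∈ {±1}`, `Δᵢ(a) = εᵢ(a-aᵢ)`
positive on the open interval `I`, `F̂(a) = ∏ᵢ (a-aᵢ)` and `x(a) = ∑ᵢ ξᵢ Δᵢ(a)^{-1/2}`: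
for every `1 ≤ k ≤ n`, the coefficient
`b_k(a) = ∑_{s=1}^{k} F̂^{(k-s)}(a)/(k-s)! · x^{(s)}(a)/(1/2)_s` satisfies
`b_k(a) = − ∑ᵢ (εᵢ ξᵢ / Δᵢ(a)^{1/2}) · (1/(k-1)!) · D_a^{k-1}(F̂/Δᵢ)(a)` on `I`. -/
theorem stmt6 (n : ℕ) (a : Fin n → ℝ) (ha : Function.Injective a)
    (ε : Fin n → ℝ) (hε : ∀ i, ε i = 1 ∨ ε i = -1)
    (I : Set ℝ) (hIopen : IsOpen I) (hIconn : I.OrdConnected)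
    (hΔ : ∀ i, ∀ t ∈ I, 0 < ε i * (t - a i))
    (ξ : Fin n → ℝ) :
    ∀ k : ℕ, 1 ≤ k → k ≤ n → ∀ t ∈ I,
      (∑ s ∈ Finset.Icc 1 k,
          iteratedDeriv (k - s) (fun u => ∏ i, (u - a i)) t / (Nat.factorial (k - s) : ℝ) *
            (iteratedDeriv s (fun u => ∑ i, ξ i * (ε i * (u - a i)) ^ (-(1/2) : ℝ)) t / poch s)) =
        - ∑ i, ε i * ξ i / (ε i * (t - a i)) ^ ((1/2) : ℝ) *
            ((1 : ℝ) / (Nat.factorial (k - 1) : ℝ)) *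
            iteratedDeriv (k - 1) (fun u => (∏ j, (u - a j)) / (ε i * (u - a i))) t :=
  stmt6_general n a ε I hΔ ξ
end

section
/- Let a₁,…,a_n be distinct reals, ε₁,…,ε_n ∈ {-1,1}, Δᵢ(a) = εᵢ(a-aᵢ), and a ∈ ℝ with Δᵢ(a) > 0 for all i; let ξᵢ ∈ ℝ. For real variables h, p, y, π with h = π² + a p², define G = ∑_{k=0}^{n} (-1)^k σ_k h^{n-k} p^{2k}, Q₁ = ∑_{k=1}^{n} b̃_k h^{n-k} π p^{2k-1} with b̃_k = (-1)^k ∑_i (ξᵢ/Δᵢ(a)^{1/2}) σ^i_{k-1}, Q₂ = ∑_{k=1}^{n} c̃_k h^{n-k} p^{2k} with c̃_k = ((-1)^{k+1}/2)[ ∑_i (ξᵢ²/Δᵢ(a)) σ^i_{k-1} + ∑_{i≠j} (ξᵢξ_j/(Δᵢ(a)Δ_j(a))^{1/2})(σ^{ij}_{k-1} + a σ^{ij}_{k-2}) ], S₁ = Q₁ + y G, and S₂ = Q₂ + y Q₁ + (y²/2) G. Then S₁² − 2 G S₂ = ∑_{k,l=1}^{n} 𝒬_{kl} h^{2n-k-l}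 p^{2(k+l)}, where 𝒬_{kl} = (-1)^{k+l+1} ∑_{i=1}^n εᵢ ξᵢ² σ^i_{k-1} σ^i_{l-1}. -/
open Polynomial

/-- For a polynomial `Q` of degree `d` written as `Q(X) = ∑_{k=0}^{d} (-1)^k σ_k X^{d-k}`,
`sig d Q k` is the coefficient `σ_k`, extended by `0` outside `0 ≤ k ≤ d`. -/
noncomputable def sig (d : ℕ) (Q : Polynomial ℝ) (k : ℤ) : ℝ :=
  if 0 ≤ k ∧ k ≤ (d : ℤ) then (-1 : ℝ) ^ k * Q.coeff (d - k.toNat) else 0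

/-- `σ_k` for `P(X) = ∏ᵢ (X-aᵢ) = ∑_{k=0}^{n} (-1)^k σ_k X^{n-k}`. -/
noncomputable def sigma (n : ℕ) (a : Fin n → ℝ) (k : ℤ) : ℝ :=
  sig n (∏ i, (X - C (a i))) k

/-- `σ^i_k` defined by `P(X)/(X-aᵢ) = ∑_{k=0}^{n-1} (-1)^k σ^i_k X^{n-1-k}`,
with `σ^i_{-1} = σ^i_n = 0`. -/
noncomputable def sigmaI (n : ℕ) (a : Fin n → ℝ) (i : Fin n) (k : ℤ) : ℝ :=
  sig (n - 1) (∏ j ∈ Finset.univ.erase i, (X - C (a j))) k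

/-- `σ^{ij}_k` (for `i ≠ j`) defined by
`P(X)/((X-aᵢ)(X-a_j)) = ∑_{k=0}^{n-2} (-1)^k σ^{ij}_k X^{n-2-k}`,
with `σ^{ij}_{-2} = σ^{ij}_{-1} = σ^{ij}_{n-1} = σ^{ij}_n = 0`. -/
noncomputable def sigmaIJ (n : ℕ) (a : Fin n → ℝ) (i j : Fin n) (k : ℤ) : ℝ :=
  sig (n - 2) (∏ l ∈ (Finset.univ.erase i).erase j, (X - C (a l))) k

/-!
The generating function `∑ₖ (-1)^k σₖ x^(d-k) t^k` of the coefficients of `∏ᵢ (X - aᵢ)` is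
`∏ᵢ (x - aᵢ t)` (Vieta), and shifting the index of `σ` only multiplies it by a monomial. With
`t = p²`, `G = ∏ᵢ (h - aᵢ t)`, `Pᵢ = ∏_{j ≠ i} (h - aⱼ t)`, `Pᵢⱼ = ∏_{l ≠ i, j} (h - aₗ t)` and
`uᵢ = ξᵢ / √Δᵢ` this gives `Q₁ = -π p ∑ uᵢ Pᵢ`,
`Q₂ = (p²/2) ∑ uᵢ² Pᵢ + (π² p²/2) ∑_{i ≠ j} uᵢ uⱼ Pᵢⱼ`
(the combination `σ^{ij}_{k-1} + a σ^{ij}_{k-2}` produces the factor `h - a p² = π²`), and the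
right-hand side is `-p⁴ ∑ εᵢ ξᵢ² Pᵢ²`. The `y`-terms cancel in `S₁² - 2 G S₂ = Q₁² - 2 G Q₂`, and
since `Pᵢ Pⱼ = G Pᵢⱼ` so do the off-diagonal terms of `Q₁²`. The diagonal terms give the claim
because `G = (π² + (a - aᵢ) p²) Pᵢ` and `(a - aᵢ) / Δᵢ = εᵢ`.
-/

open Finset

theorem sq_sum_eq_sum_sq_add_sum_sum_erase {ι R : Type*} [CommSemiring R] [DecidableEq ι]
    (s : Finset ι) (f : ι → R) :
    (∑ i ∈ s, f i) ^ 2 = ∑ i ∈ s, f i ^ 2 + ∑ i ∈ s, ∑ j ∈ s.erase i, f i * f j := by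
  rw [sq, sum_mul_sum, ← sum_add_distrib]
  exact sum_congr rfl fun i hi => by rw [← add_sum_erase s _ hi, sq]

theorem prod_erase_mul_prod_erase {ι M : Type*} [CommMonoid M] [DecidableEq ι] {s : Finset ι}
    {i j : ι} (hi : i ∈ s) (hj : j ∈ s.erase i) (f : ι → M) :
    (∏ k ∈ s.erase i, f k) * ∏ k ∈ s.erase j, f k =
      (∏ k ∈ s, f k) * ∏ k ∈ (s.erase i).erase j, f k := by
  have hij : i ∈ s.erase j := mem_erase.mpr ⟨(ne_of_mem_erase hj).symm, hi⟩
  rw [← mul_prod_erase _ f hij, erase_right_comm (a := j), ← mul_prod_erase s f hi,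
    ← mul_prod_erase _ f hj]
  ac_rfl

theorem prod_sub_mul_eq_sum_esymm {ι R : Type*} [CommRing R] (s : Finset ι) (a : ι → R)
    (x t : R) :
    ∏ i ∈ s, (x - a i * t) =
      ∑ k ∈ range (#s + 1), (-1) ^ k * (s.val.map a).esymm k * x ^ (#s - k) * t ^ k := by
  have hesymm (k : ℕ) : (s.val.map fun i => a i * t).esymm k = t ^ k * (s.val.map a).esymm k := by
    rw [← smul_eq_mul (t ^ k), Multiset.pow_smul_esymm, Multiset.map_map]
    simp only [Function.comp_def, smul_eq_mul, mul_comm t]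
  have h := congrArg (eval x) (Multiset.prod_X_sub_X_eq_sum_esymm (s.val.map fun i => a i * t))
  simp only [hesymm, Multiset.map_map, Function.comp_def, eval_multiset_prod, eval_finsetSum,
    eval_mul, eval_pow, eval_neg, eval_one, eval_C, eval_X, eval_sub, Multiset.card_map,
    card_val] at h
  rw [prod_eq_multiset_prod, h]
  exact sum_congr rfl fun k _ => by ring

theorem sig_prod_X_sub_C {ι : Type*} (s : Finset ι) (a : ι → ℝ) {k : ℕ} (hk : k ≤ #s) :
    sig #s (∏ i ∈ s, (X - C (a i))) k = (s.val.map a).esymm k := by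
  have hcoeff := Multiset.prod_X_sub_C_coeff (s.val.map a) (k := #s - k) (by simp)
  simp only [Multiset.map_map, Function.comp_def, Multiset.card_map, card_val,
    Nat.sub_sub_self hk] at hcoeff
  rw [sig, if_pos (by omega), zpow_natCast, Int.toNat_natCast, prod_eq_multiset_prod,
    hcoeff, ← mul_assoc, ← pow_add, Even.neg_one_pow ⟨k, rfl⟩, one_mul]

theorem sig_eq_zero_of_lt_zero_or_lt {d : ℕ} (Q : ℝ[X]) {k : ℤ} (hk : k < 0 ∨ d < k) :
    sig d Q k = 0 :=
  if_neg (by omega)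

theorem sum_sig_prod_X_sub_C_mul_pow {ι : Type*} (s : Finset ι) (a : ι → ℝ) (x t : ℝ) :
    ∑ k ∈ range (#s + 1), (-1) ^ k * sig #s (∏ i ∈ s, (X - C (a i))) k * x ^ (#s - k) * t ^ k =
      ∏ i ∈ s, (x - a i * t) := by
  rw [prod_sub_mul_eq_sum_esymm]
  refine sum_congr rfl fun k hk => ?_
  rw [sig_prod_X_sub_C s a (Nat.lt_succ_iff.mp (mem_range.mp hk))]

theorem sum_sig_prod_X_sub_C_shift {ι : Type*} (s : Finset ι) (a : ι → ℝ) {d r N : ℕ}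
    (hd : #s = d) {K : Finset ℕ} (hK : Icc r (r + d) ⊆ K) (hN : r + d ≤ N) {w : ℕ → ℝ}
    {c t : ℝ} (hw : ∀ k ∈ Icc r (r + d), w k = c * t ^ (k - r)) (x : ℝ) :
    ∑ k ∈ K, (-1) ^ k * sig d (∏ i ∈ s, (X - C (a i))) ((k : ℤ) - r) * x ^ (N - k) * w k =
      (-1) ^ r * c * x ^ (N - r - d) * ∏ i ∈ s, (x - a i * t) := by
  subst hd
  rw [← sum_subset hK fun k _ hk => by
      rw [sig_eq_zero_of_lt_zero_or_lt _ (by rw [mem_Icc] at hk; omega), mul_zero, zero_mul,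
        zero_mul],
    ← Ico_add_one_right_eq_Icc, sum_Ico_eq_sum_range, show r + #s + 1 - r = #s + 1 by omega,
    ← sum_sig_prod_X_sub_C_mul_pow, mul_sum]
  refine sum_congr rfl fun j hj => ?_
  have hj : j ≤ #s := Nat.lt_succ_iff.mp (mem_range.mp hj)
  rw [hw _ (mem_Icc.mpr ⟨by omega, by omega⟩), show ((r + j : ℕ) : ℤ) - r = j by push_cast; ring,
    show N - (r + j) = (N - r - #s) + (#s - j) by omega, Nat.add_sub_cancel_left]
  ring

theorem pow_two_mul_eq_pow_two_mul_mul_sq_pow {M : Type*} [Monoid M] (p : M) {r k : ℕ}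
    (h : r ≤ k) : p ^ (2 * k) = p ^ (2 * r) * (p ^ 2) ^ (k - r) := by
  rw [← pow_mul, ← pow_add]
  congr 1
  omega

theorem sq_sum_mul_prod_erase {ι R : Type*} [CommSemiring R] [DecidableEq ι] (s : Finset ι)
    (u f : ι → R) :
    (∑ i ∈ s, u i * ∏ j ∈ s.erase i, f j) ^ 2 =
      ∑ i ∈ s, u i ^ 2 * (∏ j ∈ s.erase i, f j) ^ 2 +
        (∏ i ∈ s, f i) * ∑ i ∈ s, ∑ j ∈ s.erase i, u i * u j * ∏ l ∈ (s.erase i).erase j, f l := by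
  rw [sq_sum_eq_sum_sq_add_sum_sum_erase, mul_sum]
  congr 1
  · exact sum_congr rfl fun i _ => mul_pow _ _ 2
  · refine sum_congr rfl fun i hi => ?_
    rw [mul_sum]
    refine sum_congr rfl fun j hj => ?_
    rw [mul_mul_mul_comm, prod_erase_mul_prod_erase hi hj]
    ring

theorem sq_sum_div_sqrt_mul_prod_erase {ι : Type*} [DecidableEq ι] (s : Finset ι)
    (ξ Δ f : ι → ℝ) (hΔ : ∀ i ∈ s, 0 ≤ Δ i) :
    (∑ i ∈ s, ξ i / √(Δ i) * ∏ j ∈ s.erase i, f j) ^ 2 =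
      ∑ i ∈ s, ξ i ^ 2 / Δ i * (∏ j ∈ s.erase i, f j) ^ 2 +
        (∏ i ∈ s, f i) * ∑ i ∈ s, ∑ j ∈ s.erase i,
          ξ i * ξ j / √(Δ i * Δ j) * ∏ l ∈ (s.erase i).erase j, f l := by
  rw [sq_sum_mul_prod_erase]
  congr 1
  · exact sum_congr rfl fun i hi => by rw [div_pow, Real.sq_sqrt (hΔ i hi)]
  · congr 1
    refine sum_congr rfl fun i hi => sum_congr rfl fun j hj => ?_
    rw [Real.sqrt_mul (hΔ i hi)]
    ring

theorem sum_div_mul_prod_erase_diag {ι : Type*} [DecidableEq ι] (s : Finset ι)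
    (b ε ξ : ι → ℝ) (hε : ∀ i ∈ s, ε i = 1 ∨ ε i = -1) {A : ℝ} (hb : ∀ i ∈ s, A - b i ≠ 0)
    (x t : ℝ) :
    (x - A * t) * ∑ i ∈ s, ξ i ^ 2 / (ε i * (A - b i)) * (∏ j ∈ s.erase i, (x - b j * t)) ^ 2 -
        (∏ i ∈ s, (x - b i * t)) *
          ∑ i ∈ s, ξ i ^ 2 / (ε i * (A - b i)) * ∏ j ∈ s.erase i, (x - b j * t) =
      -t * ∑ i ∈ s, ε i * ξ i ^ 2 * (∏ j ∈ s.erase i, (x - b j * t)) ^ 2 := by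
  simp only [mul_sum, ← sum_sub_distrib]
  refine sum_congr rfl fun i hi => ?_
  rw [← mul_prod_erase s _ hi]
  have hε' : ξ i ^ 2 / (ε i * (A - b i)) * (A - b i) = ε i * ξ i ^ 2 := by
    rcases hε i hi with he | he <;> rw [he] <;> field_simp [hb i hi]
  linear_combination (-t * (∏ j ∈ s.erase i, (x - b j * t)) ^ 2) * hε'

section

variable {n : ℕ} (a : Fin n → ℝ)

theorem sum_sigmaI_mul_pow (i : Fin n) {w : ℕ → ℝ} {c t : ℝ}
    (hw : ∀ k ∈ Icc 1 n, w k = c * t ^ (k - 1)) (x : ℝ) :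
    ∑ k ∈ Icc 1 n, (-1) ^ k * sigmaI n a i ((k : ℤ) - 1) * x ^ (n - k) * w k =
      -c * ∏ j ∈ univ.erase i, (x - a j * t) := by
  have hn : 1 + (n - 1) = n := by have := i.pos; omega
  have := sum_sig_prod_X_sub_C_shift (univ.erase i) a (d := n - 1) (r := 1) (N := n)
    (K := Icc 1 n) (by simp) (by rw [hn]) (by omega) (by rwa [hn]) x
  simpa [sigmaI] using this

theorem sum_sigmaIJ_mul_pow {i j : Fin n} (hij : j ≠ i) {r : ℕ} (hr₁ : 1 ≤ r) (hr₂ : r ≤ 2)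
    {w : ℕ → ℝ} {c t : ℝ} (hw : ∀ k ∈ Icc r n, w k = c * t ^ (k - r)) (x : ℝ) :
    ∑ k ∈ Icc 1 n, (-1) ^ k * sigmaIJ n a i j ((k : ℤ) - r) * x ^ (n - k) * w k =
      (-1) ^ r * c * x ^ (2 - r) * ∏ l ∈ (univ.erase i).erase j, (x - a l * t) := by
  have hn : 2 ≤ n := by have := Fin.val_ne_of_ne hij; omega
  have := sum_sig_prod_X_sub_C_shift ((univ.erase i).erase j) a (d := n - 2) (r := r) (N := n)
    (K := Icc 1 n) (by simp [card_erase_of_mem, hij]; omega) (Icc_subset_Icc hr₁ (by omega))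
    (by omega) (fun k hk => hw k (Icc_subset_Icc le_rfl (by omega) hk)) x
  rwa [show n - r - (n - 2) = 2 - r by omega] at this

theorem sum_sigma_mul_pow (x p : ℝ) :
    ∑ k ∈ range (n + 1), (-1 : ℝ) ^ k * sigma n a k * x ^ (n - k) * p ^ (2 * k) =
      ∏ i, (x - a i * p ^ 2) := by
  simpa [sigma, pow_mul] using sum_sig_prod_X_sub_C_mul_pow univ a x (p ^ 2)

theorem sum_sum_mul_sigmaI_odd (u : Fin n → ℝ) (x p π : ℝ) :
    ∑ k ∈ Icc 1 n, ((-1 : ℝ) ^ k * ∑ i, u i * sigmaI n a i ((k : ℤ) - 1)) *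
        x ^ (n - k) * π * p ^ (2 * k - 1) =
      -(π * p) * ∑ i, u i * ∏ j ∈ univ.erase i, (x - a j * p ^ 2) := by
  have hodd : ∀ k ∈ Icc 1 n, p ^ (2 * k - 1) = p * (p ^ 2) ^ (k - 1) := fun k hk => by
    rw [← pow_mul, ← pow_succ']
    congr 1
    rw [mem_Icc] at hk
    omega
  calc _ = ∑ i, u i * π * ∑ k ∈ Icc 1 n,
        (-1 : ℝ) ^ k * sigmaI n a i ((k : ℤ) - 1) * x ^ (n - k) * p ^ (2 * k - 1) := by
        simp only [mul_sum, sum_mul]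
        rw [sum_comm]
        exact sum_congr rfl fun i _ => sum_congr rfl fun k _ => by ring
    _ = _ := by
        simp only [sum_sigmaI_mul_pow a _ hodd, mul_sum]
        exact sum_congr rfl fun i _ => by ring

theorem sum_sum_mul_sigmaI_add_sum_sum_mul_sigmaIJ (α : Fin n → ℝ) (β : Fin n → Fin n → ℝ)
    (A x p : ℝ) :
    ∑ k ∈ Icc 1 n, ((-1 : ℝ) ^ (k + 1) / 2 *
        ((∑ i, α i * sigmaI n a i ((k : ℤ) - 1)) + ∑ i, ∑ j ∈ univ.erase i,
          β i j * (sigmaIJ n a i j ((k : ℤ) - 1) + A * sigmaIJ n a i j ((k : ℤ) - 2)))) *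
        x ^ (n - k) * p ^ (2 * k) =
      p ^ 2 / 2 * ∑ i, α i * ∏ j ∈ univ.erase i, (x - a j * p ^ 2) +
        (x - A * p ^ 2) * p ^ 2 / 2 *
          ∑ i, ∑ j ∈ univ.erase i, β i j * ∏ l ∈ (univ.erase i).erase j, (x - a l * p ^ 2) := by
  have heven (r : ℕ) : ∀ k ∈ Icc r n, p ^ (2 * k) = p ^ (2 * r) * (p ^ 2) ^ (k - r) :=
    fun k hk => pow_two_mul_eq_pow_two_mul_mul_sq_pow p (mem_Icc.mp hk).1
  -- The shifts are written `(1 : ℕ)`, `(2 : ℕ)` to match the form of `sum_sigmaIJ_mul_pow`.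
  calc _ = ∑ i, -(α i / 2) * ∑ k ∈ Icc 1 n,
          (-1 : ℝ) ^ k * sigmaI n a i ((k : ℤ) - 1) * x ^ (n - k) * p ^ (2 * k) +
        ∑ i, ∑ j ∈ univ.erase i, -(β i j / 2) *
          (∑ k ∈ Icc 1 n, (-1 : ℝ) ^ k * sigmaIJ n a i j ((k : ℤ) - (1 : ℕ)) *
              x ^ (n - k) * p ^ (2 * k) +
            A * ∑ k ∈ Icc 1 n, (-1 : ℝ) ^ k * sigmaIJ n a i j ((k : ℤ) - (2 : ℕ)) *
              x ^ (n - k) * p ^ (2 * k)) := by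
        simp only [mul_add, add_mul, sum_add_distrib, mul_sum, sum_mul]
        congr 1
        · rw [sum_comm]
          exact sum_congr rfl fun i _ => sum_congr rfl fun k _ => by ring
        · congr 1 <;>
          · rw [sum_comm]
            refine sum_congr rfl fun i _ => ?_
            rw [sum_comm]
            exact sum_congr rfl fun j _ => sum_congr rfl fun k _ => by push_cast; ring
    _ = _ := by
        simp only [sum_sigmaI_mul_pow a _ (heven 1)]
        congr 1
        · rw [mul_sum]
          exact sum_congr rfl fun i _ => by ring
        · rw [mul_sum]
          refine sum_congr rfl fun i _ => ?_
          rw [mul_sum]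
          refine sum_congr rfl fun j hj => ?_
          rw [sum_sigmaIJ_mul_pow a (ne_of_mem_erase hj) le_rfl (by norm_num) (heven 1) x,
            sum_sigmaIJ_mul_pow a (ne_of_mem_erase hj) (by norm_num) le_rfl (heven 2) x]
          ring

theorem sum_sum_mul_sigmaI_mul_sigmaI (e : Fin n → ℝ) (x p : ℝ) :
    ∑ k ∈ Icc 1 n, ∑ l ∈ Icc 1 n, ((-1 : ℝ) ^ (k + l + 1) *
        ∑ i, e i * sigmaI n a i ((k : ℤ) - 1) * sigmaI n a i ((l : ℤ) - 1)) *
        x ^ (2 * n - k - l) * p ^ (2 * (k + l)) =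
      -p ^ 4 * ∑ i, e i * (∏ j ∈ univ.erase i, (x - a j * p ^ 2)) ^ 2 := by
  calc _ = ∑ i, -e i * (∑ k ∈ Icc 1 n,
        (-1 : ℝ) ^ k * sigmaI n a i ((k : ℤ) - 1) * x ^ (n - k) * p ^ (2 * k)) ^ 2 := by
        simp only [sq, mul_sum, sum_mul]
        rw [(sum_congr rfl fun k _ => sum_comm).trans sum_comm]
        refine sum_congr rfl fun i _ => sum_congr rfl fun k hk => sum_congr rfl fun l hl => ?_
        rw [mem_Icc] at hk hl
        rw [show 2 * n - k - l = (n - k) + (n - l) by omega]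
        ring
    _ = _ := by
        simp only [sum_sigmaI_mul_pow a _ fun k hk =>
          pow_two_mul_eq_pow_two_mul_mul_sq_pow p (mem_Icc.mp hk).1, mul_sum]
        exact sum_congr rfl fun i _ => by ring

end

theorem stmt10_general (n : ℕ) (a : Fin n → ℝ)
    (ε : Fin n → ℝ) (hε : ∀ i, ε i = 1 ∨ ε i = -1)
    (A : ℝ) (hΔ : ∀ i, 0 < ε i * (A - a i))
    (ξ : Fin n → ℝ)
    (h p y π : ℝ) (hH : h = π ^ 2 + A * p ^ 2) :
    (∑ k ∈ Finset.Icc 1 n,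
        ((-1 : ℝ) ^ k * ∑ i, ξ i / (ε i * (A - a i)) ^ ((1/2) : ℝ) * sigmaI n a i ((k : ℤ) - 1)) *
          h ^ (n - k) * π * p ^ (2 * k - 1) +
      y * ∑ k ∈ Finset.range (n + 1), (-1 : ℝ) ^ k * sigma n a (k : ℤ) * h ^ (n - k) * p ^ (2 * k)) ^ 2 -
    2 * (∑ k ∈ Finset.range (n + 1), (-1 : ℝ) ^ k * sigma n a (k : ℤ) * h ^ (n - k) * p ^ (2 * k)) *
      (∑ k ∈ Finset.Icc 1 n,
          (((-1 : ℝ) ^ (k + 1) / 2) *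
            ((∑ i, ξ i ^ 2 / (ε i * (A - a i)) * sigmaI n a i ((k : ℤ) - 1)) +
              ∑ i, ∑ j ∈ Finset.univ.erase i,
                ξ i * ξ j / ((ε i * (A - a i)) * (ε j * (A - a j))) ^ ((1/2) : ℝ) *
                  (sigmaIJ n a i j ((k : ℤ) - 1) + A * sigmaIJ n a i j ((k : ℤ) - 2)))) *
            h ^ (n - k) * p ^ (2 * k) +
        y * ∑ k ∈ Finset.Icc 1 n,
          ((-1 : ℝ) ^ k * ∑ i, ξ i / (ε i * (A - a i)) ^ ((1/2) : ℝ) * sigmaI n a i ((k : ℤ) - 1)) *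
            h ^ (n - k) * π * p ^ (2 * k - 1) +
        y ^ 2 / 2 *
          ∑ k ∈ Finset.range (n + 1), (-1 : ℝ) ^ k * sigma n a (k : ℤ) * h ^ (n - k) * p ^ (2 * k)) =
    ∑ k ∈ Finset.Icc 1 n, ∑ l ∈ Finset.Icc 1 n,
      ((-1 : ℝ) ^ (k + l + 1) * ∑ i, ε i * ξ i ^ 2 * sigmaI n a i ((k : ℤ) - 1) * sigmaI n a i ((l : ℤ) - 1)) *
        h ^ (2 * n - k - l) * p ^ (2 * (k + l)) := by
  simp only [← Real.sqrt_eq_rpow]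
  rw [sum_sigma_mul_pow, sum_sum_mul_sigmaI_odd, sum_sum_mul_sigmaI_add_sum_sum_mul_sigmaIJ,
    sum_sum_mul_sigmaI_mul_sigmaI]
  have hsq := sq_sum_div_sqrt_mul_prod_erase univ ξ (fun i => ε i * (A - a i))
    (fun j => h - a j * p ^ 2) fun i _ => (hΔ i).le
  have hdiag := sum_div_mul_prod_erase_diag univ a ε ξ (fun i _ => hε i)
    (fun i _ => right_ne_zero_of_mul (hΔ i).ne') h (p ^ 2)
  have hπ : h - A * p ^ 2 = π ^ 2 := by rw [hH]; ring
  rw [hπ] at hdiag ⊢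
  linear_combination π ^ 2 * p ^ 2 * hsq + p ^ 2 * hdiag

/-- The algebraic identity
`S₁² − 2 G S₂ = ∑_{k,l=1}^{n} 𝒬_{kl} h^{2n-k-l} p^{2(k+l)}` with
`𝒬_{kl} = (-1)^{k+l+1} ∑ᵢ εᵢ ξᵢ² σ^i_{k-1} σ^i_{l-1}`, valid whenever `h = π² + a p²`. -/
theorem stmt10 (n : ℕ) (a : Fin n → ℝ) (ha : Function.Injective a)
    (ε : Fin n → ℝ) (hε : ∀ i, ε i = 1 ∨ ε i = -1)
    (A : ℝ) (hΔ : ∀ i, 0 < ε i * (A - a i))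
    (ξ : Fin n → ℝ)
    (h p y π : ℝ) (hH : h = π ^ 2 + A * p ^ 2) :
    (∑ k ∈ Finset.Icc 1 n,
        ((-1 : ℝ) ^ k * ∑ i, ξ i / (ε i * (A - a i)) ^ ((1/2) : ℝ) * sigmaI n a i ((k : ℤ) - 1)) *
          h ^ (n - k) * π * p ^ (2 * k - 1) +
      y * ∑ k ∈ Finset.range (n + 1), (-1 : ℝ) ^ k * sigma n a (k : ℤ) * h ^ (n - k) * p ^ (2 * k)) ^ 2 -
    2 * (∑ k ∈ Finset.range (n + 1), (-1 : ℝ) ^ k * sigma n a (k : ℤ) * h ^ (n - k) * p ^ (2 * k)) *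
      (∑ k ∈ Finset.Icc 1 n,
          (((-1 : ℝ) ^ (k + 1) / 2) *
            ((∑ i, ξ i ^ 2 / (ε i * (A - a i)) * sigmaI n a i ((k : ℤ) - 1)) +
              ∑ i, ∑ j ∈ Finset.univ.erase i,
                ξ i * ξ j / ((ε i * (A - a i)) * (ε j * (A - a j))) ^ ((1/2) : ℝ) *
                  (sigmaIJ n a i j ((k : ℤ) - 1) + A * sigmaIJ n a i j ((k : ℤ) - 2)))) *
            h ^ (n - k) * p ^ (2 * k) +
        y * ∑ k ∈ Finset.Icc 1 n,
          ((-1 : ℝ) ^ k * ∑ i, ξ i / (ε i * (A - a i)) ^ ((1/2) : ℝ) * sigmaI n a i ((k : ℤ) - 1)) *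
            h ^ (n - k) * π * p ^ (2 * k - 1) +
        y ^ 2 / 2 *
          ∑ k ∈ Finset.range (n + 1), (-1 : ℝ) ^ k * sigma n a (k : ℤ) * h ^ (n - k) * p ^ (2 * k)) =
    ∑ k ∈ Finset.Icc 1 n, ∑ l ∈ Finset.Icc 1 n,
      ((-1 : ℝ) ^ (k + l + 1) * ∑ i, ε i * ξ i ^ 2 * sigmaI n a i ((k : ℤ) - 1) * sigmaI n a i ((l : ℤ) - 1)) *
        h ^ (2 * n - k - l) * p ^ (2 * (k + l)) :=
  stmt10_general n a ε hε A hΔ ξ h p y π hH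
end

section
/- Let F be a monic real polynomial of degree n ≥ 1 with σ_k defined by F(X) = ∑_{k=0}^{n} (-1)^k σ_k X^{n-k} (σ₀ = 1), let ν ∈ ℝ, and let β₀, β₁, …, β_n, x be smooth functions on an open interval I satisfying: β₀ = ν (constant); β_{k+1}′ = −a β_k′ − (1/2) β_k + σ_k x′ for 0 ≤ k ≤ n−1; and 0 = −a β_n′ − (1/2) β_n + σ_n x′. Define x̄(a) = x(a) − (ν/2) a and β̄_k = β_k − ν σ_k for 1 ≤ k ≤ n. Then: β̄₁′ = x̄′; β̄_{k+1}′ = −a β̄_k′ − (1/2) β̄_k + σ_k x̄′ for 1 ≤ k ≤ n−1; and 0 = −a β̄_n′ − (1/2) β̄_n + σ_n x̄′. -/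
open Polynomial

theorem sig_zero_of_monic {n : ℕ} {F : Polynomial ℝ} (hF : F.Monic) (hdeg : F.natDegree = n) :
    sig n F 0 = 1 := by
  simp [sig, ← hdeg, hF.coeff_natDegree]

section Deriv

variable {𝕜 F : Type*} [NontriviallyNormedField 𝕜] [NormedAddCommGroup F] [NormedSpace 𝕜 F]

theorem derivWithin_eq_zero_of_eqOn_const {f : 𝕜 → F} {s : Set 𝕜} {c : F} {a : 𝕜}
    (hf : ∀ t ∈ s, f t = c) (ha : a ∈ s) : derivWithin f s a = 0 := by
  rw [derivWithin_congr hf (hf a ha)]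
  exact congrFun (derivWithin_const s c) a

theorem derivWithin_sub_const_mul_self {f : 𝕜 → 𝕜} {s : Set 𝕜} {a : 𝕜}
    (hs : UniqueDiffWithinAt 𝕜 s a) (hf : DifferentiableWithinAt 𝕜 f s a) (c : 𝕜) :
    derivWithin (fun t => f t - c * t) s a = derivWithin f s a - c := by
  have h := hf.hasDerivWithinAt.sub ((hasDerivWithinAt_id a s).const_mul c)
  rw [mul_one] at h
  exact h.derivWithin hs

end Deriv

theorem stmt11_general (n : ℕ) (F : Polynomial ℝ) (hmonic : F.Monic)
    (hdeg : F.natDegree = n) (ν : ℝ)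
    (I : Set ℝ) (hIopen : IsOpen I)
    (β : ℕ → ℝ → ℝ) (x : ℝ → ℝ)
    (hxs : ContDiffOn ℝ (⊤ : ℕ∞) x I)
    (hβ0 : ∀ a ∈ I, β 0 a = ν)
    (hrec : ∀ k : ℕ, k ≤ n - 1 → ∀ a ∈ I,
      derivWithin (β (k + 1)) I a =
        -a * derivWithin (β k) I a - (1/2) * β k a + sig n F (k : ℤ) * derivWithin x I a)
    (hlast : ∀ a ∈ I,
      0 = -a * derivWithin (β n) I a - (1/2) * β n a + sig n F (n : ℤ) * derivWithin x I a) :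
    (∀ a ∈ I,
      derivWithin (fun t => β 1 t - ν * sig n F 1) I a =
        derivWithin (fun t => x t - ν / 2 * t) I a) ∧
    (∀ k : ℕ, 1 ≤ k → k ≤ n - 1 → ∀ a ∈ I,
      derivWithin (fun t => β (k + 1) t - ν * sig n F ((k : ℤ) + 1)) I a =
        -a * derivWithin (fun t => β k t - ν * sig n F (k : ℤ)) I a -
          (1/2) * (β k a - ν * sig n F (k : ℤ)) +
          sig n F (k : ℤ) * derivWithin (fun t => x t - ν / 2 * t) I a) ∧
    (∀ a ∈ I,
      0 = -a * derivWithin (fun t => β n t - ν * sig n F (n : ℤ)) I a -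
          (1/2) * (β n a - ν * sig n F (n : ℤ)) +
          sig n F (n : ℤ) * derivWithin (fun t => x t - ν / 2 * t) I a) := by
  have hxbar : ∀ a ∈ I, derivWithin (fun t => x t - ν / 2 * t) I a = derivWithin x I a - ν / 2 :=
    fun a ha => derivWithin_sub_const_mul_self (hIopen.uniqueDiffWithinAt ha)
      (hxs.differentiableOn (by simp) a ha) _
  refine ⟨fun a ha => ?_, fun k _ hk a ha => ?_, fun a ha => ?_⟩
  · have h1 := hrec 0 (Nat.zero_le _) a ha
    rw [derivWithin_eq_zero_of_eqOn_const hβ0 ha, hβ0 a ha, Nat.cast_zero,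
      sig_zero_of_monic hmonic hdeg] at h1
    rw [derivWithin_sub_const, hxbar a ha, h1]
    ring
  · rw [derivWithin_sub_const, derivWithin_sub_const, hxbar a ha, hrec k hk a ha]
    ring
  · rw [derivWithin_sub_const, hxbar a ha]
    linarith [hlast a ha]

/-- Structural relation between the coefficient systems for odd-degree and
even-degree integrals: if `β₀ = ν`, `β_{k+1}′ = −a β_k′ − (1/2) β_k + σ_k x′` for `0 ≤ k ≤ n−1`
and `0 = −a β_n′ − (1/2) β_n + σ_n x′` on `I`, then `x̄(a) = x(a) − (ν/2)a` and
`β̄_k = β_k − ν σ_k` satisfy the corresponding system: `β̄₁′ = x̄′`,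
`β̄_{k+1}′ = −a β̄_k′ − (1/2) β̄_k + σ_k x̄′` for `1 ≤ k ≤ n−1`, and
`0 = −a β̄_n′ − (1/2) β̄_n + σ_n x̄′`. -/
theorem stmt11 (n : ℕ) (hn : 1 ≤ n) (F : Polynomial ℝ) (hmonic : F.Monic)
    (hdeg : F.natDegree = n) (ν : ℝ)
    (I : Set ℝ) (hIopen : IsOpen I) (hIconn : I.OrdConnected)
    (β : ℕ → ℝ → ℝ) (x : ℝ → ℝ)
    (hβs : ∀ k ≤ n, ContDiffOn ℝ (⊤ : ℕ∞) (β k) I) (hxs : ContDiffOn ℝ (⊤ : ℕ∞) x I)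
    (hβ0 : ∀ a ∈ I, β 0 a = ν)
    (hrec : ∀ k : ℕ, k ≤ n - 1 → ∀ a ∈ I,
      derivWithin (β (k + 1)) I a =
        -a * derivWithin (β k) I a - (1/2) * β k a + sig n F (k : ℤ) * derivWithin x I a)
    (hlast : ∀ a ∈ I,
      0 = -a * derivWithin (β n) I a - (1/2) * β n a + sig n F (n : ℤ) * derivWithin x I a) :
    (∀ a ∈ I,
      derivWithin (fun t => β 1 t - ν * sig n F 1) I a =
        derivWithin (fun t => x t - ν / 2 * t) I a) ∧
    (∀ k : ℕ, 1 ≤ k → k ≤ n - 1 → ∀ a ∈ I,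
      derivWithin (fun t => β (k + 1) t - ν * sig n F ((k : ℤ) + 1)) I a =
        -a * derivWithin (fun t => β k t - ν * sig n F (k : ℤ)) I a -
          (1/2) * (β k a - ν * sig n F (k : ℤ)) +
          sig n F (k : ℤ) * derivWithin (fun t => x t - ν / 2 * t) I a) ∧
    (∀ a ∈ I,
      0 = -a * derivWithin (fun t => β n t - ν * sig n F (n : ℤ)) I a -
          (1/2) * (β n a - ν * sig n F (n : ℤ)) +
          sig n F (n : ℤ) * derivWithin (fun t => x t - ν / 2 * t) I a) :=
  stmt11_general n F hmonic hdeg ν I hIopen β x hxs hβ0 hrec hlast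
end

section
/- Let r ≥ 1 and l ≥ r be integers, 1 ≤ k ≤ r, a₁ ∈ ℝ, ε ∈ {-1,1}, and let g(a) = (a-a₁)^r. Then on the set {a ∈ ℝ : ε(a-a₁) > 0}, the function x_k(a) = (ε(a-a₁))^{1/2−k} satisfies (Op_l[g] x_k)(a) = 0. -/
open Polynomial

/-!
Put `t = ε (a - a₁)` and `α = 1/2 - k`. After the substitution `j = l - s`, the `s`-th term of
`Op_l[(· - a₁)^r] x_k` is `ε^(r+l) t^(α+r-l)` times `C(r, j) (α)↓_(l-j) / (1/2)_(l-j)`, where `↓` is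
the falling factorial. Since `(1/2 - k)↓_n = (-1)^n (k - 1/2)_n` and
`(k - 1/2)_n (1/2)_(k-1) = (1/2)_(n+k-1) = (1/2)_n (n + 1/2)_(k-1)`, the ratio
`(α)↓_n / (1/2)_n` is `(-1)^n` times a polynomial of degree `k - 1` in `n`. The sum over `j` is
thus an `r`-th finite difference of a polynomial of degree `k - 1 < r`, which vanishes.
-/

open Finset

lemma ascPochhammer_eval_mul_eval_add_comm {S : Type*} [CommSemiring S] (a b : ℕ) (x : S) :
    (ascPochhammer S a).eval x * (ascPochhammer S b).eval (x + a) =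
      (ascPochhammer S b).eval x * (ascPochhammer S a).eval (x + b) := by
  have h := fun a b => congrArg (eval x) (ascPochhammer_mul (S := S) a b)
  simp only [eval_mul, eval_comp, eval_add, eval_X, eval_natCast] at h
  rw [h, h, add_comm]

theorem Polynomial.sum_neg_one_pow_mul_choose_mul_eval_eq_zero {R : Type*} [CommRing R]
    {P : R[X]} {r : ℕ} (hP : P.natDegree < r) :
    ∑ j ∈ range (r + 1), (-1) ^ (r - j) * (r.choose j : R) * P.eval (j : R) = 0 := by
  have h := congrFun (Polynomial.fwdDiff_iter_eq_zero_of_degree_lt hP) 0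
  rw [fwdDiff_iter_eq_sum_shift] at h
  simpa using h

lemma iteratedDeriv_sub_const_pow (r m : ℕ) (a₁ a : ℝ) :
    iteratedDeriv m (fun u : ℝ => (u - a₁) ^ r) a = r.descFactorial m * (a - a₁) ^ (r - m) := by
  rw [iteratedDeriv_comp_sub_const m (· ^ r)]
  exact iteratedDeriv_pow r m

lemma iteratedDeriv_rpow (α : ℝ) (s : ℕ) (x : ℝ) :
    iteratedDeriv s (fun u : ℝ => u ^ α) x = (descPochhammer ℝ s).eval α * x ^ (α - s) := by
  rw [iteratedDeriv_eq_iterate, Real.iter_deriv_rpow_const]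

lemma iteratedDeriv_sign_mul_sub_rpow {ε : ℝ} (hε : ε = 1 ∨ ε = -1) (a₁ α : ℝ) (s : ℕ) (a : ℝ) :
    iteratedDeriv s (fun u => (ε * (u - a₁)) ^ α) a =
      ε ^ s * (descPochhammer ℝ s).eval α * (ε * (a - a₁)) ^ (α - s) := by
  rw [iteratedDeriv_comp_sub_const s (fun z => (ε * z) ^ α)]
  rcases hε with rfl | rfl
  · simp only [one_mul, one_pow, iteratedDeriv_rpow]
  · simp only [neg_one_mul]
    rw [iteratedDeriv_comp_neg s (fun z : ℝ => z ^ α), iteratedDeriv_rpow, smul_eq_mul, mul_assoc]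

lemma pow_mul_sign_pow_mul_rpow {ε c : ℝ} (hε : ε ^ 2 = 1) (hc : 0 < ε * c) (α : ℝ)
    {j r l : ℕ} (hjr : j ≤ r) (hrl : r ≤ l) :
    c ^ (r - j) * ε ^ (l - j) * (ε * c) ^ (α - (l - j : ℕ)) =
      ε ^ (r + l) * (ε * c) ^ (α + r - l) := by
  have hc' : c = ε * (ε * c) := by rw [← mul_assoc, ← sq, hε, one_mul]
  have hsign : ε ^ (r + l) = ε ^ (r - j) * ε ^ (l - j) := by
    rw [← pow_add, show r + l = r - j + (l - j) + 2 * j by omega, pow_add _ _ (2 * j), pow_mul,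
      hε, one_pow, mul_one]
  have hexp : α + r - l = ((r - j : ℕ) : ℝ) + (α - (l - j : ℕ)) := by
    push_cast [Nat.cast_sub hjr, Nat.cast_sub (hjr.trans hrl)]
    ring
  rw [hsign, hexp, Real.rpow_add hc, Real.rpow_natCast]
  nth_rw 1 [hc']
  ring

lemma Op_sub_const_pow {r l : ℕ} (hrl : r ≤ l) (a₁ : ℝ) (h : ℝ → ℝ) (a : ℝ) :
    Op l (fun u => (u - a₁) ^ r) h a = ∑ j ∈ range (r + 1),
      r.choose j * (a - a₁) ^ (r - j) * (iteratedDeriv (l - j) h a / poch (l - j)) := by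
  rw [Op, ← sum_range_reflect, sum_subset (range_subset_range.2 (by omega : r + 1 ≤ l + 1))]
  · refine sum_congr rfl fun j hj => ?_
    have hjl : j ≤ l := Nat.lt_succ_iff.mp (mem_range.mp hj)
    rw [show l + 1 - 1 - j = l - j by omega, Nat.sub_sub_self hjl, iteratedDeriv_sub_const_pow,
      Nat.descFactorial_eq_factorial_mul_choose]
    field_simp
    push_cast
    ring
  · intro j _ hjr
    rw [Nat.choose_eq_zero_of_lt (not_lt.mp (mt mem_range.mpr hjr))]
    simp

lemma descPochhammer_half_sub_div_poch (k n : ℕ) :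
    (descPochhammer ℝ n).eval (1 / 2 - (k + 1) : ℝ) / poch n =
      (-1) ^ n * (ascPochhammer ℝ k).eval (n + 1 / 2 : ℝ) /
        (ascPochhammer ℝ k).eval (1 / 2 : ℝ) := by
  have hpoch : poch n ≠ 0 := (ascPochhammer_pos n _ (by norm_num)).ne'
  have hc : (ascPochhammer ℝ k).eval (1 / 2 : ℝ) ≠ 0 := (ascPochhammer_pos k _ (by norm_num)).ne'
  have hdesc : (descPochhammer ℝ n).eval (1 / 2 - (k + 1) : ℝ) =
      (-1) ^ n * (ascPochhammer ℝ n).eval (1 / 2 + k : ℝ) := by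
    rw [show (1 / 2 + k : ℝ) = -(1 / 2 - (k + 1)) by ring, ascPochhammer_eval_neg_eq_descPochhammer,
      ← mul_assoc, ← mul_pow]
    norm_num
  have hswap := ascPochhammer_eval_mul_eval_add_comm (S := ℝ) k n (1 / 2)
  rw [div_eq_div_iff hpoch hc, hdesc, poch, add_comm (n : ℝ)]
  linear_combination (-1) ^ n * hswap

lemma sum_choose_mul_descPochhammer_div_poch {k r l : ℕ} (hkr : k < r) (hrl : r ≤ l) :
    ∑ j ∈ range (r + 1),
      r.choose j * ((descPochhammer ℝ (l - j)).eval (1 / 2 - (k + 1) : ℝ) / poch (l - j)) = 0 := by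
  set P : ℝ[X] := (ascPochhammer ℝ k).comp (C (l + 1 / 2 : ℝ) - X)
  have hP : P.natDegree < r := by
    rw [natDegree_comp, ← neg_sub X, natDegree_neg, natDegree_X_sub_C, ascPochhammer_natDegree]
    omega
  have hterm : ∀ j ∈ range (r + 1),
      r.choose j * ((descPochhammer ℝ (l - j)).eval (1 / 2 - (k + 1) : ℝ) / poch (l - j)) =
        (-1) ^ (l - r) / (ascPochhammer ℝ k).eval (1 / 2 : ℝ) *
          ((-1) ^ (r - j) * r.choose j * P.eval (j : ℝ)) := by
    intro j hj
    have hjr : j ≤ r := Nat.lt_succ_iff.mp (mem_range.mp hj)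
    have hsign : ((-1) ^ (l - j) : ℝ) = (-1) ^ (l - r) * (-1) ^ (r - j) := by
      rw [← pow_add]
      congr 1
      omega
    rw [descPochhammer_half_sub_div_poch, hsign]
    simp only [P, eval_comp, eval_sub, eval_C, eval_X]
    push_cast [Nat.cast_sub (hjr.trans hrl)]
    rw [show (l + 1 / 2 - j : ℝ) = l - j + 1 / 2 by ring]
    ring
  rw [sum_congr rfl hterm, ← mul_sum, sum_neg_one_pow_mul_choose_mul_eval_eq_zero hP, mul_zero]

theorem stmt15_general (r l k : ℕ) (hl : r ≤ l) (hk1 : 1 ≤ k) (hkr : k ≤ r)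
    (a₁ ε : ℝ) (hε : ε = 1 ∨ ε = -1) :
    ∀ a : ℝ, 0 < ε * (a - a₁) →
      Op l (fun u => (u - a₁) ^ r)
        (fun u => (ε * (u - a₁)) ^ ((1/2 : ℝ) - (k : ℝ))) a = 0 := by
  intro a ha
  obtain ⟨k, rfl⟩ := Nat.exists_eq_add_of_le' hk1
  have hε2 : ε ^ 2 = 1 := by rcases hε with rfl | rfl <;> norm_num
  rw [Op_sub_const_pow hl]
  simp_rw [iteratedDeriv_sign_mul_sub_rpow hε]
  calc _ = ∑ j ∈ range (r + 1), ε ^ (r + l) * (ε * (a - a₁)) ^ ((1/2 : ℝ) - (k + 1 : ℕ) + r - l) *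
        (r.choose j * ((descPochhammer ℝ (l - j)).eval (1 / 2 - (k + 1) : ℝ) / poch (l - j))) := by
        refine sum_congr rfl fun j hj => ?_
        rw [← pow_mul_sign_pow_mul_rpow hε2 ha _ (Nat.lt_succ_iff.mp (mem_range.mp hj)) hl]
        push_cast
        ring
    _ = 0 := by rw [← mul_sum, sum_choose_mul_descPochhammer_div_poch (by omega) hl, mul_zero]

/-- For integers `r ≥ 1`, `l ≥ r`, `1 ≤ k ≤ r`, `a₁ ∈ ℝ`, `ε ∈ {±1}`,
and `g(a) = (a-a₁)^r`, the function `x_k(a) = (ε(a-a₁))^{1/2−k}` satisfies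
`(Op_l[g] x_k)(a) = 0` on `{a : ε(a-a₁) > 0}`. -/
theorem stmt15 (r l k : ℕ) (hr : 1 ≤ r) (hl : r ≤ l) (hk1 : 1 ≤ k) (hkr : k ≤ r)
    (a₁ ε : ℝ) (hε : ε = 1 ∨ ε = -1) :
    ∀ a : ℝ, 0 < ε * (a - a₁) →
      Op l (fun u => (u - a₁) ^ r)
        (fun u => (ε * (u - a₁)) ^ ((1/2 : ℝ) - (k : ℝ))) a = 0 :=
  stmt15_general r l k hl hk1 hkr a₁ ε hε
end

section
/- For integers r ≥ 1, l ≥ r, and 1 ≤ k ≤ r, one has ∑_{σ=0}^{r} (-1)^σ C(r,σ) · (k − 1/2)_{σ+l−r} / (1/2)_{σ+l−r} = 0, where the Pochhammer symbols are evaluated in ℝ. -/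
open Polynomial Finset
open scoped fwdDiff

private lemma fwdDiff_eval (P : ℝ[X]) :
    fwdDiff (1:ℝ) (fun t => P.eval t) = fun t => (P.comp (X + C 1) - P).eval t := by
  funext t
  simp [fwdDiff, eval_comp]

private lemma key_iter (r : ℕ) (P : ℝ[X]) (hP : P.degree < r) :
    (fwdDiff (1:ℝ))^[r] (fun t => P.eval t) = fun _ => 0 := by
  induction r generalizing P with
  | zero =>
    have h0 : P = 0 := by
      rw [← Polynomial.degree_eq_bot]
      simpa using hP
    simp [h0, fwdDiff]
  | succ r ih =>
    rw [Function.iterate_succ_apply, fwdDiff_eval]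
    apply ih
    rcases eq_or_ne P 0 with h0 | h0
    · simp [h0]
    · rcases eq_or_ne P.natDegree 0 with hd | hd
      · obtain ⟨a, rfl⟩ := Polynomial.natDegree_eq_zero.mp hd
        simp
      · have hq : (X + C (1:ℝ)).natDegree ≠ 0 := by
          rw [natDegree_X_add_C]; norm_num
        have hlc : (P.comp (X + C 1)).leadingCoeff = P.leadingCoeff := by
          rw [leadingCoeff_comp hq, (monic_X_add_C (1:ℝ)).leadingCoeff, one_pow, mul_one]
        have hnd : (P.comp (X + C 1)).natDegree = P.natDegree := by
          rw [natDegree_comp, natDegree_X_add_C, mul_one]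
        have hc0 : P.comp (X + C 1) ≠ 0 := by
          intro h
          apply h0
          rw [← leadingCoeff_eq_zero, ← hlc, h, leadingCoeff_zero]
        have hdeg : (P.comp (X + C 1)).degree = P.degree := by
          rw [degree_eq_natDegree hc0, degree_eq_natDegree h0, hnd]
        have hlt : (P.comp (X + C 1) - P).degree < P.degree := by
          rw [← hdeg]; exact degree_sub_lt hdeg hc0 hlc
        have hPd : P.degree ≤ (r : WithBot ℕ) := by
          rw [degree_eq_natDegree h0] at hP ⊢
          exact_mod_cast Nat.lt_succ_iff.mp (by exact_mod_cast hP)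
        exact lt_of_lt_of_le hlt hPd

private lemma key_sum (r : ℕ) (P : ℝ[X]) (hP : P.degree < r) (x : ℝ) :
    ∑ σ ∈ Finset.range (r + 1), (-1 : ℝ) ^ σ * (Nat.choose r σ : ℝ) * P.eval (x + σ) = 0 := by
  have h := fwdDiff_iter_eq_sum_shift (1:ℝ) (fun t => P.eval t) r x
  rw [key_iter r P hP] at h
  simp only [zsmul_eq_mul, smul_eq_mul, nsmul_eq_mul, mul_one] at h
  push_cast at h
  have h2 : (0 : ℝ) = ∑ k ∈ Finset.range (r + 1),
      ((-1 : ℝ) ^ (r - k) * (Nat.choose r k : ℝ)) * P.eval (x + k) := by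
    rw [← h]
  have h3 : ∑ σ ∈ Finset.range (r + 1), (-1 : ℝ) ^ σ * (Nat.choose r σ : ℝ) * P.eval (x + σ)
      = (-1 : ℝ) ^ r * ∑ k ∈ Finset.range (r + 1),
        ((-1 : ℝ) ^ (r - k) * (Nat.choose r k : ℝ)) * P.eval (x + k) := by
    rw [Finset.mul_sum]
    apply Finset.sum_congr rfl
    intro k hk
    have hk' : k ≤ r := Nat.lt_succ_iff.mp (Finset.mem_range.mp hk)
    have : (-1 : ℝ) ^ r = (-1 : ℝ) ^ (r - k) * (-1 : ℝ) ^ k := by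
      rw [← pow_add, Nat.sub_add_cancel hk']
    rw [this]
    ring_nf
    rw [pow_mul', neg_one_sq, one_pow, mul_one]
  rw [h3, ← h2, mul_zero]

/-- For integers `r ≥ 1`, `l ≥ r` and `1 ≤ k ≤ r`,
`∑_{σ=0}^{r} (-1)^σ C(r,σ) · (k − 1/2)_{σ+l−r} / (1/2)_{σ+l−r} = 0`. -/
theorem stmt16 (r l k : ℕ) (hr : 1 ≤ r) (hl : r ≤ l) (hk1 : 1 ≤ k) (hkr : k ≤ r) :
    ∑ σ ∈ Finset.range (r + 1),
        (-1 : ℝ) ^ σ * (Nat.choose r σ : ℝ) *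
          ((ascPochhammer ℝ (σ + l - r)).eval ((k : ℝ) - 1/2) /
            (ascPochhammer ℝ (σ + l - r)).eval (1/2 : ℝ)) = 0 := by
  set n := k - 1 with hn
  set m := l - r with hm
  set c := (ascPochhammer ℝ n).eval (1/2 : ℝ) with hc
  have hcpos : 0 < c := ascPochhammer_pos n (1/2) (by norm_num)
  set P : ℝ[X] := C c⁻¹ * ascPochhammer ℝ n with hP
  have hdeg : P.degree < (r : WithBot ℕ) := by
    have h1 : (ascPochhammer ℝ n).degree ≤ (n : WithBot ℕ) := by
      simpa [ascPochhammer_natDegree] using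
        Polynomial.degree_le_natDegree (p := ascPochhammer ℝ n)
    calc P.degree ≤ (C c⁻¹).degree + (ascPochhammer ℝ n).degree := degree_mul_le _ _
    _ ≤ 0 + (n : WithBot ℕ) := add_le_add degree_C_le h1
    _ = (n : WithBot ℕ) := zero_add _
    _ < (r : WithBot ℕ) := by exact_mod_cast (show n < r by omega)
  have := key_sum r P hdeg ((1/2 : ℝ) + m)
  rw [← this]
  apply Finset.sum_congr rfl
  intro σ hσ
  congr 1
  -- pointwise identity
  have hms : σ + l - r = σ + m := by omega
  rw [hms]
  set D := (ascPochhammer ℝ (σ + m)).eval (1/2 : ℝ) with hD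
  have hDpos : 0 < D := ascPochhammer_pos _ _ (by norm_num)
  have hA : c * (ascPochhammer ℝ (σ + m)).eval ((1/2 : ℝ) + n)
      = (ascPochhammer ℝ ((σ + m) + n)).eval (1/2 : ℝ) := by
    have h := congrArg (Polynomial.eval (1/2 : ℝ)) (ascPochhammer_mul (S := ℝ) n (σ + m))
    rw [add_comm n (σ + m)] at h
    simpa [hc, eval_comp] using h
  have hB : D * (ascPochhammer ℝ n).eval ((1/2 : ℝ) + (σ + m : ℕ))
      = (ascPochhammer ℝ ((σ + m) + n)).eval (1/2 : ℝ) := by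
    have h := congrArg (Polynomial.eval (1/2 : ℝ)) (ascPochhammer_mul (S := ℝ) (σ + m) n)
    simpa [hD, eval_comp] using h
  have hkn : (k : ℝ) - 1/2 = (1/2 : ℝ) + n := by
    have : (n : ℝ) = (k : ℝ) - 1 := by
      rw [hn]
      push_cast [hk1]
      ring
    rw [this]; ring
  have hcomm : (1/2 : ℝ) + (m:ℝ) + (σ:ℝ) = (1/2 : ℝ) + ((σ + m : ℕ) : ℝ) := by
    push_cast; ring
  rw [hkn, hP, eval_mul, eval_C, hcomm, div_eq_iff hDpos.ne']
  rw [inv_mul_eq_div, div_mul_eq_mul_div, eq_div_iff hcpos.ne']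
  linear_combination hA - hB
end
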